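/- arXiv:2605.28703 — 2 statements merged into one kernel-verified Lean document; each statement's English description precedes it below -/
import Mathlib

section
/- For every constant integer k ≥ 2 there exists a constant C > 0 such that, for all positive integer multiples n of k, the expected runtime (number of iterations until the all-ones string is first generated) of the Darwinian (1+1) EA on DLB_k over {0,1}^n is at most C·n^{k+1}. -/
open Finset
open scoped ENNReal

noncomputable section

/-- Bit strings of length `n`. -/
abbrev BitStr (n : ℕ) := Fin n → Bool

/-- The all-ones string. -/
def allOnes (n : ℕ) : BitStr n := fun _ => true

/-- The number of ones in the `ℓ`-th block (`0`-indexed), i.e. among the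
(`0`-indexed) positions `ℓ*k, …, ℓ*k + k - 1`. -/
def blockOnes (k n : ℕ) (x : BitStr n) (ℓ : ℕ) : ℕ :=
  (Finset.univ.filter fun i : Fin n => ℓ * k ≤ i.1 ∧ i.1 < ℓ * k + k ∧ x i = true).card

/-- The number of leading all-ones blocks of `x` (at most `n / k`).  For
`x ≠ allOnes n` (and `k ∣ n`) this is `c(x) - 1`, the (`0`-indexed) index of the
critical block. -/
def leadBlocks (k n : ℕ) (x : BitStr n) : ℕ :=
  Nat.findGreatest (fun j => ∀ ℓ < j, blockOnes k n x ℓ = k) (n / k)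

/-- The DeceptiveLeadingBlocks function with block length `k`:
`DLB_k(x) = k (c(x) - 1) + (k - 1 - ‖x_{B_{c(x)}}‖₁)` for `x` not the all-ones
string, and `DLB_k` of the all-ones string is `n`. -/
def dlb (k n : ℕ) (x : BitStr n) : ℕ :=
  if x = allOnes n then n
  else k * leadBlocks k n x + (k - 1 - blockOnes k n x (leadBlocks k n x))

/-- Bitwise mutation with rate `1/n`: each bit is flipped independently with
probability `1/n`. -/
def mutatePMF (n : ℕ) (x : BitStr n) : PMF (BitStr n) :=
  PMF.ofFintype
    (fun y => ∏ i, if y i = x i then 1 - (n : ℝ≥0∞)⁻¹ else (n : ℝ≥0∞)⁻¹)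
    (by
      classical
      have key := (Fintype.prod_sum
        (fun (i : Fin n) (b : Bool) => if b = x i then 1 - (n : ℝ≥0∞)⁻¹ else (n : ℝ≥0∞)⁻¹)).symm
      rw [key]
      refine Finset.prod_eq_one fun i _ => ?_
      have h1 : (1 : ℝ≥0∞) ≤ (n : ℝ≥0∞) := by exact_mod_cast i.pos
      have hinv : (n : ℝ≥0∞)⁻¹ ≤ 1 := ENNReal.inv_le_one.mpr h1
      rcases Bool.eq_false_or_eq_true (x i) with hx | hx <;>
        simp [Fintype.sum_bool, hx, tsub_add_cancel_of_le hinv, add_tsub_cancel_of_le hinv])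

/-- The probability of an event `E` under a probability mass function `p`. -/
def prOf {α : Type*} (p : PMF α) (E : Set α) : ℝ≥0∞ :=
  ∑' a, E.indicator (fun a => p a) a

/-- One iteration of the Darwinian (1+1) EA on `dlb k n`, on states consisting of
the current parent individual together with a flag recording whether the all-ones
string has already been generated. -/
def darwinStep (k n : ℕ) (s : BitStr n × Bool) : PMF (BitStr n × Bool) :=
  (mutatePMF n s.1).map fun y =>
    (if dlb k n s.1 ≤ dlb k n y then y else s.1,
     if y = allOnes n then true else s.2)

/-- The distribution of the state of the Darwinian (1+1) EA on `dlb k n` after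
`t` iterations, starting from a uniformly random individual. -/
def darwinDist (k n : ℕ) : ℕ → PMF (BitStr n × Bool)
  | 0 => (PMF.uniformOfFintype (BitStr n)).map fun x =>
      (x, if x = allOnes n then true else false)
  | t + 1 => (darwinDist k n t).bind (darwinStep k n)

/-- The expected runtime (expected number of iterations until the all-ones string
is first generated) of the Darwinian (1+1) EA on `dlb k n`, computed as
`∑_{t ≥ 0} P(T > t)`. -/
def darwinERT (k n : ℕ) : ℝ≥0∞ :=
  ∑' t : ℕ, prOf (darwinDist k n t) {s | s.2 = false}

namespace DLBProof

def flip (n : ℕ) (S : Finset (Fin n)) (x : BitStr n) : BitStr n :=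
  fun i => if i ∈ S then !(x i) else x i

variable {k n : ℕ}

lemma blockOnes_le_k (x : BitStr n) (ℓ : ℕ) : blockOnes k n x ℓ ≤ k := by
  have h : blockOnes k n x ℓ ≤ (Finset.Ico (ℓ*k) (ℓ*k+k)).card := by
    apply Finset.card_le_card_of_injOn (fun i => i.1)
    · intro a ha
      simp only [Finset.mem_coe, Finset.mem_filter, Finset.mem_univ, true_and] at ha
      simp only [Finset.mem_coe, Finset.mem_Ico]
      exact ⟨ha.1, ha.2.1⟩
    · intro a _ b _ hab
      exact Fin.ext hab
  simpa using h

lemma blockOnes_congr {x y : BitStr n} {ℓ : ℕ}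
    (h : ∀ i : Fin n, ℓ*k ≤ i.1 → i.1 < ℓ*k + k → x i = y i) :
    blockOnes k n x ℓ = blockOnes k n y ℓ := by
  unfold blockOnes
  congr 1
  apply Finset.filter_congr
  intro i _
  constructor
  · rintro ⟨h1, h2, h3⟩; exact ⟨h1, h2, (h i h1 h2) ▸ h3⟩
  · rintro ⟨h1, h2, h3⟩; exact ⟨h1, h2, (h i h1 h2) ▸ h3⟩

lemma blockOnes_eq_k_of_all {x : BitStr n} {ℓ : ℕ} (hb : ℓ*k + k ≤ n)
    (h : ∀ i : Fin n, ℓ*k ≤ i.1 → i.1 < ℓ*k + k → x i = true) :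
    blockOnes k n x ℓ = k := by
  unfold blockOnes
  have he : (Finset.univ.filter fun i : Fin n => ℓ * k ≤ i.1 ∧ i.1 < ℓ * k + k ∧ x i = true)
      = Finset.univ.filter fun i : Fin n => ℓ * k ≤ i.1 ∧ i.1 < ℓ * k + k := by
    apply Finset.filter_congr
    intro i _
    constructor
    · rintro ⟨h1, h2, _⟩; exact ⟨h1, h2⟩
    · rintro ⟨h1, h2⟩; exact ⟨h1, h2, h i h1 h2⟩
  rw [he]
  rw [Finset.card_bij (fun (i : Fin n) _ => i.1) ?_ ?_ ?_ (t := Finset.Ico (ℓ*k) (ℓ*k+k))]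
  · simp
  · intro a ha
    simp only [Finset.mem_filter, Finset.mem_univ, true_and] at ha
    simp only [Finset.mem_Ico]; exact ha
  · intro a _ b _ hab; exact Fin.ext hab
  · intro b hb'
    simp only [Finset.mem_Ico] at hb'
    exact ⟨⟨b, by omega⟩, by simp only [Finset.mem_filter, Finset.mem_univ, true_and]; exact hb', rfl⟩

lemma all_of_blockOnes_eq_k {x : BitStr n} {ℓ : ℕ} (hb : ℓ*k + k ≤ n)
    (h : blockOnes k n x ℓ = k) :
    ∀ i : Fin n, ℓ*k ≤ i.1 → i.1 < ℓ*k + k → x i = true := by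
  intro i h1 h2
  by_contra hxi
  -- filter ⊆ block \ {i}, so card ≤ k - 1
  have hsub : (Finset.univ.filter fun j : Fin n => ℓ * k ≤ j.1 ∧ j.1 < ℓ * k + k ∧ x j = true)
      ≤ (Finset.univ.filter fun j : Fin n => ℓ * k ≤ j.1 ∧ j.1 < ℓ * k + k ∧ x j = true) := le_refl _
  have hcard : k ≤ (Finset.univ.filter fun j : Fin n => ℓ * k ≤ j.1 ∧ j.1 < ℓ * k + k ∧ x j = true).card := h.symm.le
  -- build injection from Ico minus {i.1} impossible; do counting instead
  have hk' : blockOnes k n x ℓ ≤ ((Finset.Ico (ℓ*k) (ℓ*k+k)).erase i.1).card := by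
    apply Finset.card_le_card_of_injOn (fun j => j.1)
    · intro a ha
      simp only [Finset.mem_coe, Finset.mem_filter, Finset.mem_univ, true_and] at ha
      simp only [Finset.mem_coe, Finset.mem_erase, Finset.mem_Ico]
      refine ⟨?_, ha.1, ha.2.1⟩
      intro hai
      have : a = i := Fin.ext hai
      rw [this] at ha
      exact hxi ha.2.2
    · intro a _ b _ hab; exact Fin.ext hab
  rw [Finset.card_erase_of_mem (by simp only [Finset.mem_Ico]; exact ⟨h1, h2⟩)] at hk'
  simp only [Nat.card_Ico] at hk'
  omega

lemma leadBlocks_spec (x : BitStr n) : ∀ ℓ < leadBlocks k n x, blockOnes k n x ℓ = k := by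
  have h0 : ∀ ℓ < 0, blockOnes k n x ℓ = k := by omega
  have h := Nat.findGreatest_spec (P := fun j => ∀ ℓ < j, blockOnes k n x ℓ = k)
    (n := n / k) (Nat.zero_le _) h0
  exact h

lemma leadBlocks_le (x : BitStr n) : leadBlocks k n x ≤ n / k :=
  Nat.findGreatest_le _

lemma leadBlocks_is_greatest {x : BitStr n} {j : ℕ} (h1 : leadBlocks k n x < j)
    (h2 : j ≤ n / k) : ¬ ∀ ℓ < j, blockOnes k n x ℓ = k := by
  have h1' : Nat.findGreatest (fun j => ∀ ℓ < j, blockOnes k n x ℓ = k) (n / k) < j := h1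
  exact Nat.findGreatest_is_greatest h1' h2

lemma le_leadBlocks {x : BitStr n} {j : ℕ} (h : j ≤ n / k)
    (hP : ∀ ℓ < j, blockOnes k n x ℓ = k) : j ≤ leadBlocks k n x := by
  have h' : j ≤ Nat.findGreatest (fun j => ∀ ℓ < j, blockOnes k n x ℓ = k) (n / k) :=
    Nat.le_findGreatest h hP
  exact h' 

lemma leadBlocks_lt (hk : 0 < k) (hn : k ∣ n) (hx : x ≠ allOnes n) :
    leadBlocks k n x < n / k := by
  rcases Nat.lt_or_ge (leadBlocks k n x) (n / k) with h | h
  · exact h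
  · exfalso
    have hL : leadBlocks k n x = n / k := le_antisymm (leadBlocks_le x) h
    apply hx
    funext i
    have hik : i.1 / k < n / k := Nat.div_lt_div_of_lt_of_dvd hn i.2
    have hblk : (i.1/k)*k + k ≤ n := by
      have h1 : (i.1/k + 1) * k ≤ (n/k) * k := Nat.mul_le_mul_right k hik
      rw [Nat.div_mul_cancel hn, Nat.add_mul, Nat.one_mul] at h1
      omega
    have hfull : blockOnes k n x (i.1/k) = k := leadBlocks_spec x _ (hL ▸ hik)
    have hlt2 : i.1 < (i.1/k)*k + k := by
      have e1 := Nat.div_add_mod i.1 k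
      have e2 : i.1 % k < k := Nat.mod_lt _ hk
      have e3 : (i.1/k)*k = k*(i.1/k) := Nat.mul_comm _ _
      omega
    have := all_of_blockOnes_eq_k hblk hfull i (Nat.div_mul_le_self _ _) hlt2
    simp [allOnes, this]

lemma critical_lt_k (hk : 0 < k) (hn : k ∣ n) (hx : x ≠ allOnes n) :
    blockOnes k n x (leadBlocks k n x) < k := by
  have hlt := leadBlocks_lt hk hn hx
  have hgr := leadBlocks_is_greatest (k := k) (n := n) (x := x) (j := leadBlocks k n x + 1) (by omega) (by omega)
  rcases Nat.lt_or_ge (blockOnes k n x (leadBlocks k n x)) k with h | h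
  · exact h
  · exfalso
    apply hgr
    intro ℓ hℓ
    rcases Nat.lt_or_ge ℓ (leadBlocks k n x) with h' | h'
    · exact leadBlocks_spec x ℓ h'
    · have : ℓ = leadBlocks k n x := by omega
      rw [this]
      exact le_antisymm (blockOnes_le_k x _) h

lemma dlb_add_one_le (hk : 0 < k) (hn : k ∣ n) (hx : x ≠ allOnes n) :
    dlb k n x + 1 ≤ n := by
  have hlt := leadBlocks_lt hk hn hx
  have h1 : k * (leadBlocks k n x + 1) ≤ k * (n / k) := Nat.mul_le_mul_left k (by omega)
  rw [Nat.mul_div_cancel' hn, Nat.mul_add, Nat.mul_one] at h1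
  rw [dlb, if_neg hx]
  have h2 : k - 1 - blockOnes k n x (leadBlocks k n x) ≤ k - 1 := Nat.sub_le _ _
  omega

lemma dlb_le (hk : 0 < k) (hn : k ∣ n) (x : BitStr n) : dlb k n x ≤ n := by
  by_cases hx : x = allOnes n
  · rw [dlb, if_pos hx]
  · have := dlb_add_one_le hk hn hx; omega

lemma blockOnes_allOnes (hb : ℓ*k + k ≤ n) : blockOnes k n (allOnes n) ℓ = k :=
  blockOnes_eq_k_of_all hb (fun _ _ _ => rfl)

lemma improvement (hk : 2 ≤ k) (hn : k ∣ n) {x : BitStr n} (hx : x ≠ allOnes n) :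
    ∃ S : Finset (Fin n), S.card ≤ k ∧ dlb k n x < dlb k n (flip n S x) := by
  classical
  set L := leadBlocks k n x with hLdef
  have hk0 : 0 < k := by omega
  have hL : L < n / k := leadBlocks_lt hk0 hn hx
  have hblk : L*k + k ≤ n := by
    have h1 : (L + 1) * k ≤ (n/k) * k := Nat.mul_le_mul_right k (by omega)
    rw [Nat.div_mul_cancel hn, Nat.add_mul, Nat.one_mul] at h1
    omega
  set m := blockOnes k n x L with hmdef
  have hmk : m < k := critical_lt_k hk0 hn hx
  have hdlbx : dlb k n x = k * L + (k - 1 - m) := by rw [dlb, if_neg hx]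
  -- helper: membership in block ℓ determines ℓ
  have hdet : ∀ (ℓ : ℕ) (i : Fin n), ℓ*k ≤ i.1 → i.1 < ℓ*k + k → i.1 / k = ℓ := by
    intro ℓ i h1 h2
    exact Nat.div_eq_of_lt_le h1 (by rw [Nat.add_mul, Nat.one_mul]; omega)
  rcases Nat.eq_zero_or_pos m with hm0 | hmpos
  · -- m = 0 : flip whole block
    set S := Finset.univ.filter (fun i : Fin n => L * k ≤ i.1 ∧ i.1 < L * k + k) with hSdef
    have hScard : S.card = k := by
      rw [hSdef, Finset.card_bij (fun (i : Fin n) _ => i.1) ?_ ?_ ?_ (t := Finset.Ico (L*k) (L*k+k))]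
      · simp
      · intro a ha
        simp only [Finset.mem_filter, Finset.mem_univ, true_and] at ha
        simp only [Finset.mem_Ico]; exact ha
      · intro a _ b _ hab; exact Fin.ext hab
      · intro b hb'
        simp only [Finset.mem_Ico] at hb'
        exact ⟨⟨b, by omega⟩, by simp only [Finset.mem_filter, Finset.mem_univ, true_and]; exact hb', rfl⟩
    refine ⟨S, hScard.le, ?_⟩
    set x' := flip n S x with hx'def
    -- x i = false on the block
    have hfalse : ∀ i : Fin n, L*k ≤ i.1 → i.1 < L*k + k → x i = false := by
      intro i h1 h2
      by_contra hxi
      have hxi' : x i = true := by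
        cases hxit : x i
        · exact absurd hxit hxi
        · rfl
      have : i ∈ (Finset.univ.filter fun j : Fin n => L * k ≤ j.1 ∧ j.1 < L * k + k ∧ x j = true) := by
        simp only [Finset.mem_filter, Finset.mem_univ, true_and]; exact ⟨h1, h2, hxi'⟩
      have hc : 0 < blockOnes k n x L := Finset.card_pos.mpr ⟨i, this⟩
      omega
    have hx'true : ∀ i : Fin n, L*k ≤ i.1 → i.1 < L*k + k → x' i = true := by
      intro i h1 h2
      have : i ∈ S := by simp only [hSdef, Finset.mem_filter, Finset.mem_univ, true_and]; exact ⟨h1, h2⟩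
      simp only [hx'def, flip, if_pos this, hfalse i h1 h2, Bool.not_false]
    have hx'out : ∀ i : Fin n, ¬ (L*k ≤ i.1 ∧ i.1 < L*k + k) → x' i = x i := by
      intro i hnot
      have : i ∉ S := by simp only [hSdef, Finset.mem_filter, Finset.mem_univ, true_and]; exact hnot
      simp only [hx'def, flip, if_neg this]
    -- blocks < L unchanged
    have hlow : ∀ ℓ < L, blockOnes k n x' ℓ = k := by
      intro ℓ hℓ
      have : blockOnes k n x ℓ = blockOnes k n x' ℓ := by
        apply blockOnes_congr
        intro i h1 h2
        rw [hx'out i]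
        intro ⟨hh1, hh2⟩
        have e1 := hdet ℓ i h1 h2
        have e2 := hdet L i hh1 hh2
        omega
      rw [← this]
      exact leadBlocks_spec x ℓ hℓ
    have hLfull : blockOnes k n x' L = k := blockOnes_eq_k_of_all hblk hx'true
    have hP : ∀ ℓ < L + 1, blockOnes k n x' ℓ = k := by
      intro ℓ hℓ
      rcases Nat.lt_or_ge ℓ L with h' | h'
      · exact hlow ℓ h'
      · have : ℓ = L := by omega
        rw [this]; exact hLfull
    have hlead' : L + 1 ≤ leadBlocks k n x' := le_leadBlocks (by omega) hP
    by_cases hx'1 : x' = allOnes n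
    · rw [hdlbx, dlb, if_pos hx'1]
      have := dlb_add_one_le hk0 hn hx
      rw [hdlbx] at this
      omega
    · rw [hdlbx, dlb, if_neg hx'1]
      have h1 : k * (L+1) ≤ k * leadBlocks k n x' := Nat.mul_le_mul_left k hlead'
      rw [Nat.mul_add, Nat.mul_one] at h1
      have h2 : k - 1 - m ≤ k - 1 := Nat.sub_le _ _
      omega
  · -- m ≥ 1: flip one true bit in the critical block
    have hne : (Finset.univ.filter fun j : Fin n => L * k ≤ j.1 ∧ j.1 < L * k + k ∧ x j = true).Nonempty := by
      rw [← Finset.card_pos]; exact hmpos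
    obtain ⟨i0, hi0⟩ := hne
    simp only [Finset.mem_filter, Finset.mem_univ, true_and] at hi0
    refine ⟨{i0}, by simp; omega, ?_⟩
    set x' := flip n {i0} x with hx'def
    have hx'i0 : x' i0 = false := by
      simp [hx'def, flip, hi0.2.2]
    have hx'out : ∀ i : Fin n, i ≠ i0 → x' i = x i := by
      intro i hi
      simp [hx'def, flip, hi]
    -- blocks ≠ L unchanged
    have hlow : ∀ ℓ < L, blockOnes k n x' ℓ = k := by
      intro ℓ hℓ
      have : blockOnes k n x ℓ = blockOnes k n x' ℓ := by
        apply blockOnes_congr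
        intro i h1 h2
        rw [hx'out i]
        intro hii
        have e1 := hdet ℓ i h1 h2
        have e2 := hdet L i0 hi0.1 hi0.2.1
        rw [hii] at e1
        omega
      rw [← this]
      exact leadBlocks_spec x ℓ hℓ
    -- critical block loses one
    have hcrit : blockOnes k n x' L = m - 1 := by
      have hset : (Finset.univ.filter fun j : Fin n => L * k ≤ j.1 ∧ j.1 < L * k + k ∧ x' j = true)
          = (Finset.univ.filter fun j : Fin n => L * k ≤ j.1 ∧ j.1 < L * k + k ∧ x j = true).erase i0 := by
        ext i
        simp only [Finset.mem_filter, Finset.mem_univ, true_and, Finset.mem_erase]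
        by_cases hii : i = i0
        · subst hii
          simp [hx'i0]
        · rw [hx'out i hii]
          tauto
      rw [blockOnes, hset, Finset.card_erase_of_mem]
      · rfl
      · simp only [Finset.mem_filter, Finset.mem_univ, true_and]; exact hi0
    have hm1 : m - 1 < k := by omega
    have hlead' : leadBlocks k n x' = L := by
      have hge : L ≤ leadBlocks k n x' := le_leadBlocks (by omega) hlow
      rcases Nat.lt_or_ge L (leadBlocks k n x') with h' | h'
      · exfalso
        have := leadBlocks_spec x' L h'
        omega
      · omega
    have hx'1 : x' ≠ allOnes n := by
      intro he
      rw [he] at hcrit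
      rw [blockOnes_allOnes hblk] at hcrit
      omega
    rw [hdlbx, dlb, if_neg hx'1, hlead', hcrit]
    omega

lemma real_one_sub_inv_pow {n : ℕ} (hn : 2 ≤ n) : (8:ℝ)⁻¹ ≤ (1 - (n:ℝ)⁻¹)^n := by
  set x : ℝ := (n:ℝ)⁻¹ with hx
  have hn0 : (0:ℝ) < n := by positivity
  have hx0 : 0 < x := by positivity
  have hx2 : x ≤ 1/2 := by
    rw [hx]
    rw [inv_le_comm₀ hn0 (by norm_num)]
    · norm_num; exact_mod_cast hn
  have hxn : x * n = 1 := by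
    rw [hx]; field_simp
  have h1 : 1 + 2*x ≤ Real.exp (2*x) := by
    have := Real.add_one_le_exp (2*x); linarith
  have h2 : (1+2*x)^n ≤ Real.exp 2 := by
    calc (1+2*x)^n ≤ (Real.exp (2*x))^n := by
          apply pow_le_pow_left₀ (by linarith) h1
      _ = Real.exp ((n:ℝ) * (2*x)) := (Real.exp_nat_mul _ n).symm
      _ = Real.exp 2 := by rw [show (n:ℝ) * (2*x) = 2 * (x * n) by ring, hxn, mul_one]
  have h3 : Real.exp 2 ≤ 8 := by
    have h := Real.exp_one_lt_d9
    have : Real.exp 2 = Real.exp 1 * Real.exp 1 := by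
      rw [← Real.exp_add]; norm_num
    nlinarith [Real.exp_pos 1]
  have h4 : (1:ℝ) ≤ (1 - x)*(1+2*x) := by nlinarith
  have h5 : (1:ℝ) ≤ ((1-x)*(1+2*x))^n := one_le_pow₀ h4
  have h6 : ((1-x)*(1+2*x))^n = (1-x)^n * (1+2*x)^n := mul_pow _ _ _
  have h7 : (0:ℝ) ≤ (1-x)^n := pow_nonneg (by linarith) n
  have h8 : (1-x)^n * (1+2*x)^n ≤ (1-x)^n * 8 := by
    apply mul_le_mul_of_nonneg_left (by linarith) h7
  have : (1:ℝ) ≤ (1-x)^n * 8 := by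
    calc (1:ℝ) ≤ ((1-x)*(1+2*x))^n := h5
      _ = (1-x)^n * (1+2*x)^n := h6
      _ ≤ (1-x)^n * 8 := h8
  linarith

lemma ennreal_one_sub_inv_pow {n : ℕ} (hn : 2 ≤ n) :
    (8:ℝ≥0∞)⁻¹ ≤ (1 - (n:ℝ≥0∞)⁻¹)^n := by
  have hn0 : (0:ℝ) < n := by positivity
  have hinv1 : (n:ℝ)⁻¹ ≤ 1 := by
    rw [inv_le_one₀ hn0]
    exact_mod_cast Nat.one_le_of_lt hn
  have e1 : (1 : ℝ≥0∞) - (n:ℝ≥0∞)⁻¹ = ENNReal.ofReal (1 - (n:ℝ)⁻¹) := by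
    rw [ENNReal.ofReal_sub _ (by positivity), ENNReal.ofReal_one,
      ENNReal.ofReal_inv_of_pos hn0, ENNReal.ofReal_natCast]
  have e2 : (8:ℝ≥0∞)⁻¹ = ENNReal.ofReal ((8:ℝ)⁻¹) := by
    rw [ENNReal.ofReal_inv_of_pos (by norm_num), ENNReal.ofReal_ofNat]
  rw [e1, ← ENNReal.ofReal_pow (by linarith), e2]
  exact ENNReal.ofReal_le_ofReal (real_one_sub_inv_pow hn)

lemma mutate_apply_flip {n : ℕ} (x : BitStr n) (S : Finset (Fin n)) :
    mutatePMF n x (flip n S x)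
      = ((n:ℝ≥0∞)⁻¹)^S.card * (1 - (n:ℝ≥0∞)⁻¹)^(n - S.card) := by
  classical
  rw [mutatePMF, PMF.ofFintype_apply]
  have hfac : ∀ i : Fin n, (if flip n S x i = x i then 1 - (n : ℝ≥0∞)⁻¹ else (n : ℝ≥0∞)⁻¹)
      = (if i ∈ S then (n : ℝ≥0∞)⁻¹ else 1 - (n : ℝ≥0∞)⁻¹) := by
    intro i
    by_cases hi : i ∈ S
    · simp [flip, hi]
    · simp [flip, hi]
  rw [Finset.prod_congr rfl (fun i _ => hfac i), ← Finset.prod_mul_prod_compl S]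
  have e1 : ∏ i ∈ S, (if i ∈ S then (n:ℝ≥0∞)⁻¹ else 1 - (n:ℝ≥0∞)⁻¹) = ((n:ℝ≥0∞)⁻¹)^S.card := by
    rw [Finset.prod_congr rfl (fun i hi => if_pos hi), Finset.prod_const]
  have e2 : ∏ i ∈ Sᶜ, (if i ∈ S then (n:ℝ≥0∞)⁻¹ else 1 - (n:ℝ≥0∞)⁻¹)
      = (1 - (n:ℝ≥0∞)⁻¹)^(n - S.card) := by
    rw [Finset.prod_congr rfl (fun i hi => if_neg (Finset.mem_compl.mp hi)), Finset.prod_const,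
      Finset.card_compl, Fintype.card_fin]
  rw [e1, e2]

lemma mutate_flip_lb {n : ℕ} (hn2 : 2 ≤ n) {x : BitStr n} {S : Finset (Fin n)}
    (hcard : S.card ≤ k) :
    (8:ℝ≥0∞)⁻¹ * ((n:ℝ≥0∞)⁻¹)^k ≤ mutatePMF n x (flip n S x) := by
  rw [mutate_apply_flip]
  have hB : ((n:ℝ≥0∞))⁻¹ ≤ 1 := ENNReal.inv_le_one.mpr (by exact_mod_cast Nat.one_le_of_lt hn2)
  have hA : (1 - (n:ℝ≥0∞)⁻¹) ≤ 1 := tsub_le_self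
  have h1 : ((n:ℝ≥0∞)⁻¹)^k ≤ ((n:ℝ≥0∞)⁻¹)^S.card :=
    pow_le_pow_of_le_one (by positivity) hB hcard
  have h2 : (1 - (n:ℝ≥0∞)⁻¹)^n ≤ (1 - (n:ℝ≥0∞)⁻¹)^(n - S.card) :=
    pow_le_pow_of_le_one (by positivity) hA (Nat.sub_le _ _)
  calc (8:ℝ≥0∞)⁻¹ * ((n:ℝ≥0∞)⁻¹)^k
      ≤ (1 - (n:ℝ≥0∞)⁻¹)^n * ((n:ℝ≥0∞)⁻¹)^k :=
        mul_le_mul_left (ennreal_one_sub_inv_pow hn2) _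
    _ ≤ (1 - (n:ℝ≥0∞)⁻¹)^(n - S.card) * ((n:ℝ≥0∞)⁻¹)^S.card := mul_le_mul' h2 h1
    _ = ((n:ℝ≥0∞)⁻¹)^S.card * (1 - (n:ℝ≥0∞)⁻¹)^(n - S.card) := mul_comm _ _

section PMFSums

variable {α β : Type*} [Fintype α] [Fintype β]

lemma sum_pmf_one (μ : PMF α) : ∑ a, μ a = 1 := by
  have := μ.tsum_coe; rwa [tsum_fintype] at this

lemma sum_map_mul (μ : PMF α) (g : α → β) (Φ : β → ℝ≥0∞) :
    ∑ b, (μ.map g) b * Φ b = ∑ a, μ a * Φ (g a) := by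
  classical
  have h : ∀ b, (μ.map g) b = ∑ a, if b = g a then μ a else 0 := by
    intro b; rw [PMF.map_apply, tsum_fintype]
  simp_rw [h, Finset.sum_mul]
  rw [Finset.sum_comm]
  apply Finset.sum_congr rfl
  intro a _
  have : ∀ b, (if b = g a then μ a else 0) * Φ b = (if b = g a then μ a * Φ b else 0) := by
    intro b; split <;> simp
  simp_rw [this]
  rw [Finset.sum_ite_eq' Finset.univ (g a) (fun b => μ a * Φ b), if_pos (Finset.mem_univ _)]

lemma sum_bind_mul (μ : PMF α) (κ : α → PMF β) (Φ : β → ℝ≥0∞) :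
    ∑ b, (μ.bind κ) b * Φ b = ∑ a, μ a * ∑ b, (κ a) b * Φ b := by
  classical
  have h : ∀ b, (μ.bind κ) b = ∑ a, μ a * κ a b := by
    intro b; rw [PMF.bind_apply, tsum_fintype]
  simp_rw [h, Finset.sum_mul]
  rw [Finset.sum_comm]
  apply Finset.sum_congr rfl
  intro a _
  rw [Finset.mul_sum]
  apply Finset.sum_congr rfl
  intro b _
  ring

end PMFSums

def phi (k n : ℕ) (s : BitStr n × Bool) : ℝ≥0∞ := ((n - dlb k n s.1 : ℕ) : ℝ≥0∞)

lemma step_drift (hk : 2 ≤ k) (hn : k ∣ n) (hn2 : 2 ≤ n) (s : BitStr n × Bool)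
    (hs : s.2 = false → s.1 ≠ allOnes n) :
    (if s.2 = false then (8:ℝ≥0∞)⁻¹ * ((n:ℝ≥0∞)⁻¹)^k else 0)
      + ∑ s', darwinStep k n s s' * phi k n s' ≤ phi k n s := by
  classical
  obtain ⟨x, b⟩ := s
  have hk0 : 0 < k := by omega
  rw [darwinStep, sum_map_mul]
  have hsel : ∀ y : BitStr n, dlb k n x ≤ dlb k n (if dlb k n x ≤ dlb k n y then y else x) := by
    intro y; split
    · assumption
    · exact le_refl _
  have hpt : ∀ y : BitStr n,
      phi k n ((if dlb k n x ≤ dlb k n y then y else x), (if y = allOnes n then true else b))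
        ≤ phi k n (x, b) := by
    intro y
    exact Nat.cast_le.mpr (Nat.sub_le_sub_left (hsel y) n)
  rcases Bool.eq_false_or_eq_true b with hb | hb
  · -- b = true
    subst hb
    rw [if_neg (by simp), zero_add]
    calc ∑ y, mutatePMF n x y * phi k n ((if dlb k n x ≤ dlb k n y then y else x),
            (if y = allOnes n then true else true))
        ≤ ∑ y, mutatePMF n x y * phi k n (x, true) :=
          Finset.sum_le_sum (fun y _ => mul_le_mul_right (hpt y) _)
      _ = phi k n (x, true) := by rw [← Finset.sum_mul, sum_pmf_one, one_mul]
  · -- b = false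
    subst hb
    rw [if_pos rfl]
    have hx : x ≠ allOnes n := hs rfl
    obtain ⟨S, hScard, himp⟩ := improvement hk hn hx
    set y₀ := flip n S x with hy₀
    have hdlby : dlb k n y₀ ≤ n := dlb_le hk0 hn _
    have hdlbx1 : dlb k n x + 1 ≤ n := dlb_add_one_le hk0 hn hx
    have hki : phi k n ((if dlb k n x ≤ dlb k n y₀ then y₀ else x),
        (if y₀ = allOnes n then true else false)) + 1 ≤ phi k n (x, false) := by
      rw [if_pos (le_of_lt himp)]
      have hnat : (n - dlb k n y₀) + 1 ≤ n - dlb k n x := by omega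
      calc phi k n (y₀, (if y₀ = allOnes n then true else false)) + 1
          = (((n - dlb k n y₀ : ℕ) + 1 : ℕ) : ℝ≥0∞) := by rw [phi]; push_cast; ring
        _ ≤ ((n - dlb k n x : ℕ) : ℝ≥0∞) := Nat.cast_le.mpr hnat
        _ = phi k n (x, false) := rfl
    calc (8:ℝ≥0∞)⁻¹ * ((n:ℝ≥0∞)⁻¹)^k
          + ∑ y, mutatePMF n x y * phi k n ((if dlb k n x ≤ dlb k n y then y else x),
              (if y = allOnes n then true else false))
        ≤ mutatePMF n x y₀
          + ∑ y, mutatePMF n x y * phi k n ((if dlb k n x ≤ dlb k n y then y else x),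
              (if y = allOnes n then true else false)) :=
          add_le_add_left (mutate_flip_lb hn2 hScard) _
      _ = mutatePMF n x y₀
          + (mutatePMF n x y₀ * phi k n ((if dlb k n x ≤ dlb k n y₀ then y₀ else x),
              (if y₀ = allOnes n then true else false))
            + ∑ y ∈ Finset.univ.erase y₀, mutatePMF n x y
                * phi k n ((if dlb k n x ≤ dlb k n y then y else x),
                    (if y = allOnes n then true else false))) := by
          rw [← Finset.add_sum_erase Finset.univ
            (fun y => mutatePMF n x y * phi k n ((if dlb k n x ≤ dlb k n y then y else x),
              (if y = allOnes n then true else false))) (Finset.mem_univ y₀)]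
      _ = mutatePMF n x y₀ * (phi k n ((if dlb k n x ≤ dlb k n y₀ then y₀ else x),
              (if y₀ = allOnes n then true else false)) + 1)
            + ∑ y ∈ Finset.univ.erase y₀, mutatePMF n x y
                * phi k n ((if dlb k n x ≤ dlb k n y then y else x),
                    (if y = allOnes n then true else false)) := by ring
      _ ≤ mutatePMF n x y₀ * phi k n (x, false)
            + ∑ y ∈ Finset.univ.erase y₀, mutatePMF n x y * phi k n (x, false) := by
          apply add_le_add (mul_le_mul_right hki _)
          exact Finset.sum_le_sum (fun y _ => mul_le_mul_right (hpt y) _)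
      _ = ∑ y, mutatePMF n x y * phi k n (x, false) :=
          Finset.add_sum_erase Finset.univ
            (fun y => mutatePMF n x y * phi k n (x, false)) (Finset.mem_univ y₀)
      _ = phi k n (x, false) := by rw [← Finset.sum_mul, sum_pmf_one, one_mul]

lemma darwin_inv (k n : ℕ) (t : ℕ) :
    ∀ s ∈ (darwinDist k n t).support, s.2 = false → s.1 ≠ allOnes n := by
  induction t with
  | zero =>
    intro s hs
    simp only [darwinDist, PMF.support_map] at hs
    obtain ⟨x, -, rfl⟩ := hs
    intro h2
    by_cases hx : x = allOnes n
    · simp [hx] at h2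
    · simpa using hx
  | succ t ih =>
    intro s hs
    simp only [darwinDist, PMF.support_bind, Set.mem_iUnion, exists_prop] at hs
    obtain ⟨s0, hs0, hstep⟩ := hs
    rw [darwinStep, PMF.support_map] at hstep
    obtain ⟨y, -, rfl⟩ := hstep
    intro h2 h1
    simp only at h2 h1
    by_cases hy : y = allOnes n
    · rw [if_pos hy] at h2; exact absurd h2 (by simp)
    · rw [if_neg hy] at h2
      have hx0 := ih s0 hs0 h2
      by_cases hc : dlb k n s0.1 ≤ dlb k n y
      · rw [if_pos hc] at h1; exact hy h1
      · rw [if_neg hc] at h1; exact hx0 h1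

def expPhi (k n : ℕ) (μ : PMF (BitStr n × Bool)) : ℝ≥0∞ := ∑ s, μ s * phi k n s

def prF (n : ℕ) (μ : PMF (BitStr n × Bool)) : ℝ≥0∞ :=
  ∑ s, μ s * (if s.2 = false then 1 else 0)

lemma expPhi_le (k n : ℕ) (μ : PMF (BitStr n × Bool)) : expPhi k n μ ≤ (n : ℝ≥0∞) := by
  rw [expPhi]
  calc ∑ s, μ s * phi k n s ≤ ∑ s, μ s * (n : ℝ≥0∞) := by
        apply Finset.sum_le_sum
        intro s _
        exact mul_le_mul_right (Nat.cast_le.mpr (Nat.sub_le n _)) _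
    _ = (n : ℝ≥0∞) := by rw [← Finset.sum_mul, sum_pmf_one, one_mul]

lemma exp_drift (hk : 2 ≤ k) (hn : k ∣ n) (hn2 : 2 ≤ n) (t : ℕ) :
    (8:ℝ≥0∞)⁻¹ * ((n:ℝ≥0∞)⁻¹)^k * prF n (darwinDist k n t)
      + expPhi k n (darwinDist k n (t+1)) ≤ expPhi k n (darwinDist k n t) := by
  classical
  have hE : expPhi k n (darwinDist k n (t+1))
      = ∑ s, darwinDist k n t s * ∑ s', darwinStep k n s s' * phi k n s' := by
    rw [expPhi]
    show ∑ s, ((darwinDist k n t).bind (darwinStep k n)) s * phi k n s = _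
    exact sum_bind_mul _ _ _
  rw [hE, prF, Finset.mul_sum, ← Finset.sum_add_distrib]
  rw [expPhi]
  apply Finset.sum_le_sum
  intro s _
  by_cases h0 : darwinDist k n t s = 0
  · simp [h0]
  · have hsupp : s ∈ (darwinDist k n t).support := (PMF.mem_support_iff _ _).mpr h0
    have hd := step_drift hk hn hn2 s (darwin_inv k n t s hsupp)
    calc (8:ℝ≥0∞)⁻¹ * ((n:ℝ≥0∞)⁻¹)^k * (darwinDist k n t s * (if s.2 = false then 1 else 0))
          + darwinDist k n t s * ∑ s', darwinStep k n s s' * phi k n s'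
        = darwinDist k n t s
            * ((if s.2 = false then (8:ℝ≥0∞)⁻¹ * ((n:ℝ≥0∞)⁻¹)^k else 0)
              + ∑ s', darwinStep k n s s' * phi k n s') := by
          by_cases hb : s.2 = false <;> simp [hb] <;> ring
      _ ≤ darwinDist k n t s * phi k n s := mul_le_mul_right hd _

lemma partial_bound (hk : 2 ≤ k) (hn : k ∣ n) (hn2 : 2 ≤ n) (T : ℕ) :
    (8:ℝ≥0∞)⁻¹ * ((n:ℝ≥0∞)⁻¹)^k * ∑ t ∈ Finset.range T, prF n (darwinDist k n t)
      + expPhi k n (darwinDist k n T) ≤ (n : ℝ≥0∞) := by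
  induction T with
  | zero => simpa using expPhi_le k n _
  | succ T ih =>
    rw [Finset.sum_range_succ, mul_add]
    calc (8:ℝ≥0∞)⁻¹ * ((n:ℝ≥0∞)⁻¹)^k * ∑ t ∈ Finset.range T, prF n (darwinDist k n t)
          + (8:ℝ≥0∞)⁻¹ * ((n:ℝ≥0∞)⁻¹)^k * prF n (darwinDist k n T)
          + expPhi k n (darwinDist k n (T+1))
        = (8:ℝ≥0∞)⁻¹ * ((n:ℝ≥0∞)⁻¹)^k * ∑ t ∈ Finset.range T, prF n (darwinDist k n t)
          + ((8:ℝ≥0∞)⁻¹ * ((n:ℝ≥0∞)⁻¹)^k * prF n (darwinDist k n T)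
            + expPhi k n (darwinDist k n (T+1))) := by ring
      _ ≤ (8:ℝ≥0∞)⁻¹ * ((n:ℝ≥0∞)⁻¹)^k * ∑ t ∈ Finset.range T, prF n (darwinDist k n t)
          + expPhi k n (darwinDist k n T) := add_le_add_right (exp_drift hk hn hn2 T) _
      _ ≤ (n : ℝ≥0∞) := ih

lemma prOf_eq (n : ℕ) (μ : PMF (BitStr n × Bool)) :
    prOf μ {s | s.2 = false} = prF n μ := by
  rw [prOf, tsum_fintype, prF]
  apply Finset.sum_congr rfl
  intro s _
  rw [Set.indicator_apply]
  by_cases hb : s.2 = false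
  · rw [if_pos (by exact hb), if_pos hb, mul_one]
  · rw [if_neg (by exact hb), if_neg hb, mul_zero]


end DLBProof


/-- For every constant integer `k ≥ 2` there is a constant `C > 0` such that for
all positive integer multiples `n` of `k`, the expected runtime of the Darwinian
(1+1) EA on `DLB_k` over `{0,1}^n` is at most `C · n^(k+1)`. -/
theorem darwin_ert_upper (k : ℕ) (hk : 2 ≤ k) :
    ∃ C : ℝ, 0 < C ∧ ∀ n : ℕ, 0 < n → k ∣ n →
      darwinERT k n ≤ ENNReal.ofReal C * (n : ℝ≥0∞) ^ (k + 1) := by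
  classical
  refine ⟨8, by norm_num, ?_⟩
  intro n hpos hdvd
  have hn2 : 2 ≤ n := le_trans hk (Nat.le_of_dvd hpos hdvd)
  have hne : (n:ℝ≥0∞) ≠ 0 := Nat.cast_ne_zero.mpr (by omega)
  have hnt : (n:ℝ≥0∞) ≠ ⊤ := ENNReal.natCast_ne_top n
  set p : ℝ≥0∞ := (8:ℝ≥0∞)⁻¹ * ((n:ℝ≥0∞)⁻¹)^k with hp
  have hp0 : p ≠ 0 := by
    apply mul_ne_zero
    · exact ENNReal.inv_ne_zero.mpr (by norm_num)
    · exact pow_ne_zero _ (ENNReal.inv_ne_zero.mpr hnt)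
  have hpt : p ≠ ⊤ := by
    apply ENNReal.mul_ne_top
    · exact ENNReal.inv_ne_top.mpr (by norm_num)
    · exact ENNReal.pow_ne_top (ENNReal.inv_ne_top.mpr hne)
  have hmain : p * darwinERT k n ≤ (n:ℝ≥0∞) := by
    rw [darwinERT]
    have e : ∑' t, prOf (darwinDist k n t) {s | s.2 = false}
        = ∑' t, DLBProof.prF n (darwinDist k n t) :=
      tsum_congr (fun t => DLBProof.prOf_eq n _)
    rw [e, ← ENNReal.tsum_mul_left, ENNReal.tsum_eq_iSup_sum]
    apply iSup_le
    intro F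
    have hsub : F ⊆ Finset.range (F.sup id + 1) := by
      intro t ht
      exact Finset.mem_range.mpr (Nat.lt_succ_of_le (Finset.le_sup (f := id) ht))
    calc ∑ t ∈ F, p * DLBProof.prF n (darwinDist k n t)
        ≤ ∑ t ∈ Finset.range (F.sup id + 1), p * DLBProof.prF n (darwinDist k n t) :=
          Finset.sum_le_sum_of_subset hsub
      _ = p * ∑ t ∈ Finset.range (F.sup id + 1), DLBProof.prF n (darwinDist k n t) :=
          (Finset.mul_sum _ _ _).symm
      _ ≤ (n:ℝ≥0∞) := le_trans le_self_add (DLBProof.partial_bound hk hdvd hn2 _)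
  have hR : p * (ENNReal.ofReal 8 * (n:ℝ≥0∞)^(k+1)) = (n:ℝ≥0∞) := by
    rw [ENNReal.ofReal_ofNat, hp, pow_succ]
    calc (8:ℝ≥0∞)⁻¹ * ((n:ℝ≥0∞)⁻¹)^k * ((8:ℝ≥0∞) * ((n:ℝ≥0∞)^k * (n:ℝ≥0∞)))
        = ((8:ℝ≥0∞)⁻¹ * 8) * ((((n:ℝ≥0∞)⁻¹) * (n:ℝ≥0∞))^k * (n:ℝ≥0∞)) := by
          rw [mul_pow]; ring
      _ = (n:ℝ≥0∞) := by
          rw [ENNReal.inv_mul_cancel (by norm_num) (by norm_num),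
            ENNReal.inv_mul_cancel hne hnt, one_pow, one_mul, one_mul]
  exact (ENNReal.mul_le_mul_iff_right hp0 hpt).mp (le_trans hmain (le_of_eq hR.symm))

end
end

section
/- For every constant integer k ≥ 2 there exists a constant c > 0 such that, for all sufficiently large positive integer multiples n of k, the expected runtime (number of iterations until the all-ones string is first generated) of the Darwinian (1+1) EA on DLB_k over {0,1}^n is at least c·n^{k+1}. -/
open Finset
open scoped ENNReal

noncomputable section

namespace DLBaux

variable {k n : ℕ}

/-- The set of positions of block `j`. -/
def Blk (k n j : ℕ) : Finset (Fin n) :=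
  Finset.univ.filter fun i : Fin n => j * k ≤ i.1 ∧ i.1 < j * k + k

lemma mem_Blk {j : ℕ} {i : Fin n} : i ∈ Blk k n j ↔ j * k ≤ i.1 ∧ i.1 < j * k + k := by
  simp [Blk]

lemma blockOnes_eq_card (x : BitStr n) (j : ℕ) :
    blockOnes k n x j = ((Blk k n j).filter fun i => x i = true).card := by
  unfold blockOnes Blk
  rw [Finset.filter_filter]
  congr 1
  apply Finset.filter_congr
  intro i _
  tauto

lemma card_Blk (j : ℕ) (hk : 0 < k) (h : j * k + k ≤ n) : (Blk k n j).card = k := by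
  have hn : 0 < n := by omega
  have : (Blk k n j).card = (Finset.range k).card := by
    apply Finset.card_nbij' (fun (a : Fin n) => a.1 - j * k)
        (fun (r : ℕ) => (⟨(j * k + r) % n, Nat.mod_lt _ hn⟩ : Fin n))
    · intro a ha
      simp only [Finset.mem_coe, mem_Blk] at ha
      simp only [Finset.mem_coe, Finset.mem_range]
      omega
    · intro r hr
      simp only [Finset.mem_coe, Finset.mem_range] at hr
      simp only [Finset.mem_coe, mem_Blk]
      have : (j * k + r) % n = j * k + r := Nat.mod_eq_of_lt (by omega)
      rw [this]
      omega
    · intro a ha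
      simp only [Finset.mem_coe, mem_Blk] at ha
      apply Fin.ext
      simp only
      have : j * k + (a.1 - j * k) = a.1 := by omega
      rw [this]
      exact Nat.mod_eq_of_lt a.isLt
    · intro r hr
      simp only [Finset.mem_coe, Finset.mem_range] at hr
      have : (j * k + r) % n = j * k + r := Nat.mod_eq_of_lt (by omega)
      simp only [this]
      omega
  rw [this, Finset.card_range]

lemma blockOnes_le (x : BitStr n) (j : ℕ) (hk : 0 < k) (h : j * k + k ≤ n) :
    blockOnes k n x j ≤ k := by
  rw [blockOnes_eq_card]
  calc ((Blk k n j).filter fun i => x i = true).card ≤ (Blk k n j).card :=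
        Finset.card_filter_le _ _
    _ = k := card_Blk j hk h

lemma blockOnes_eq_k_iff (x : BitStr n) (j : ℕ) (hk : 0 < k) (h : j * k + k ≤ n) :
    blockOnes k n x j = k ↔ ∀ i ∈ Blk k n j, x i = true := by
  rw [blockOnes_eq_card]
  constructor
  · intro hc i hi
    by_contra hfalse
    have hss : ((Blk k n j).filter fun i => x i = true) ⊂ Blk k n j := by
      refine ⟨Finset.filter_subset _ _, fun hsub => ?_⟩
      have := hsub hi
      rw [Finset.mem_filter] at this
      exact hfalse this.2
    have := Finset.card_lt_card hss
    rw [hc, card_Blk j hk h] at this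
    exact lt_irrefl _ this
  · intro hall
    rw [Finset.filter_true_of_mem hall, card_Blk j hk h]

lemma blockOnes_eq_zero_iff (x : BitStr n) (j : ℕ) :
    blockOnes k n x j = 0 ↔ ∀ i ∈ Blk k n j, x i = false := by
  rw [blockOnes_eq_card, Finset.card_eq_zero]
  constructor
  · intro hemp i hi
    by_contra hft
    have hxi : x i = true := by
      cases hxv : x i
      · exact absurd hxv hft
      · rfl
    have : i ∈ (Blk k n j).filter fun i => x i = true := by
      rw [Finset.mem_filter]; exact ⟨hi, hxi⟩
    rw [hemp] at this
    exact absurd this (Finset.notMem_empty i)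
  · intro hall
    rw [Finset.filter_eq_empty_iff]
    intro i hi
    simp [hall i hi]

/-! ### leadBlocks and dlb lemmas -/

lemma blk_bound {j : ℕ} (hd : k ∣ n) (hj : j < n / k) : j * k + k ≤ n := by
  obtain ⟨c, rfl⟩ := hd
  rcases Nat.eq_zero_or_pos k with hk | hk
  · subst hk; simp at hj
  · rw [Nat.mul_div_cancel_left c hk] at hj
    calc j * k + k = (j + 1) * k := by ring
      _ ≤ c * k := Nat.mul_le_mul_right k (by omega)
      _ = k * c := Nat.mul_comm _ _

lemma n_eq (hd : k ∣ n) : k * (n / k) = n := Nat.mul_div_cancel' hd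

lemma leadBlocks_le (x : BitStr n) : leadBlocks k n x ≤ n / k :=
  Nat.findGreatest_le _

lemma leadBlocks_spec (x : BitStr n) :
    ∀ ℓ < leadBlocks k n x, blockOnes k n x ℓ = k := by
  have h0 : ∀ ℓ < 0, blockOnes k n x ℓ = k := by omega
  have := Nat.findGreatest_spec
    (P := fun j => ∀ ℓ < j, blockOnes k n x ℓ = k) (Nat.zero_le (n / k)) h0
  exact this

lemma leadBlocks_crit (x : BitStr n) (h : leadBlocks k n x < n / k) :
    blockOnes k n x (leadBlocks k n x) ≠ k := by
  intro hfull
  have hng := Nat.findGreatest_is_greatest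
    (Nat.lt_succ_self (leadBlocks k n x)) (by omega :
      leadBlocks k n x + 1 ≤ n / k)
  apply hng
  intro ℓ hℓ
  rcases Nat.lt_succ_iff_lt_or_eq.mp hℓ with h' | h'
  · exact leadBlocks_spec x ℓ h'
  · rw [h']; exact hfull

lemma leadBlocks_ge (x : BitStr n) {j : ℕ} (hj : j ≤ n / k)
    (hfull : ∀ ℓ < j, blockOnes k n x ℓ = k) : j ≤ leadBlocks k n x :=
  Nat.le_findGreatest hj hfull

lemma leadBlocks_eq (x : BitStr n) {j : ℕ} (hj : j ≤ n / k)
    (hfull : ∀ ℓ < j, blockOnes k n x ℓ = k)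
    (hnot : blockOnes k n x j ≠ k) : leadBlocks k n x = j := by
  refine le_antisymm ?_ (leadBlocks_ge x hj hfull)
  by_contra hlt
  exact hnot (leadBlocks_spec x j (by omega))

lemma leadBlocks_allOnes (hk : 0 < k) (hd : k ∣ n) :
    leadBlocks k n (allOnes n) = n / k := by
  refine le_antisymm (leadBlocks_le _) (leadBlocks_ge _ le_rfl ?_)
  intro ℓ hℓ
  rw [blockOnes_eq_k_iff _ _ hk (blk_bound hd hℓ)]
  intro i _
  rfl

lemma pos_in_own_block (hk : 0 < k) (i : Fin n) :
    i ∈ Blk k n (i.1 / k) := by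
  rw [mem_Blk]
  have h1 : k * (i.1 / k) + i.1 % k = i.1 := Nat.div_add_mod i.1 k
  have h2 : i.1 % k < k := Nat.mod_lt _ hk
  constructor
  · rw [Nat.mul_comm]; omega
  · rw [Nat.mul_comm]; omega

lemma eq_allOnes_of_lead (hk : 0 < k) (hd : k ∣ n) (x : BitStr n)
    (h : n / k ≤ leadBlocks k n x) : x = allOnes n := by
  funext i
  have hj : i.1 / k < n / k := Nat.div_lt_div_of_lt_of_dvd hd i.isLt
  have hfull := leadBlocks_spec x (i.1 / k) (lt_of_lt_of_le hj h)
  rw [blockOnes_eq_k_iff _ _ hk (blk_bound hd hj)] at hfull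
  exact hfull i (pos_in_own_block hk i)

lemma leadBlocks_lt (hk : 0 < k) (hd : k ∣ n) {x : BitStr n}
    (hx : x ≠ allOnes n) : leadBlocks k n x < n / k :=
  lt_of_le_of_ne (leadBlocks_le x)
    (fun he => hx (eq_allOnes_of_lead hk hd x he.ge))

lemma dlb_allOnes : dlb k n (allOnes n) = n := if_pos rfl

lemma dlb_ne {x : BitStr n} (hx : x ≠ allOnes n) :
    dlb k n x = k * leadBlocks k n x
      + (k - 1 - blockOnes k n x (leadBlocks k n x)) := if_neg hx

lemma dlb_ge_k_mul {x : BitStr n} (hx : x ≠ allOnes n) :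
    k * leadBlocks k n x ≤ dlb k n x := by
  rw [dlb_ne hx]; omega

lemma dlb_lt_k_mul (hk : 0 < k) {x : BitStr n} (hx : x ≠ allOnes n) :
    dlb k n x < k * (leadBlocks k n x + 1) := by
  rw [dlb_ne hx, Nat.mul_succ]
  omega

lemma dlb_lt_n (hk : 0 < k) (hd : k ∣ n) {x : BitStr n} (hx : x ≠ allOnes n) :
    dlb k n x < n := by
  have h1 := dlb_lt_k_mul hk hx
  have h2 : leadBlocks k n x + 1 ≤ n / k := leadBlocks_lt hk hd hx
  have h3 : k * (leadBlocks k n x + 1) ≤ k * (n / k) :=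
    Nat.mul_le_mul_left k h2
  rw [n_eq hd] at h3
  omega

lemma allOnes_of_n_le_dlb (hk : 0 < k) (hd : k ∣ n) {y : BitStr n}
    (h : n ≤ dlb k n y) : y = allOnes n := by
  by_contra hy
  exact absurd h (not_le.mpr (dlb_lt_n hk hd hy))

lemma accept_lead_mono (hk : 0 < k) (hd : k ∣ n) {x y : BitStr n}
    (h : dlb k n x ≤ dlb k n y) : leadBlocks k n x ≤ leadBlocks k n y := by
  by_cases hy : y = allOnes n
  · subst hy
    rw [leadBlocks_allOnes hk hd]
    exact leadBlocks_le x
  · by_cases hx : x = allOnes n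
    · subst hx
      rw [dlb_allOnes] at h
      exact absurd (allOnes_of_n_le_dlb hk hd h) hy
    · have h1 : k * leadBlocks k n x < k * (leadBlocks k n y + 1) :=
        lt_of_le_of_lt (le_trans (dlb_ge_k_mul hx) h) (dlb_lt_k_mul hk hy)
      have := Nat.lt_of_mul_lt_mul_left h1
      omega

/-- Pointwise "all bits below position `j*k` are one". -/
def FullBelow (k : ℕ) (j : ℕ) (x : BitStr n) : Prop :=
  ∀ i : Fin n, i.1 < j * k → x i = true

lemma fullBelow_iff (hk : 0 < k) (hd : k ∣ n) {j : ℕ} (hj : j ≤ n / k)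
    (x : BitStr n) :
    (∀ ℓ < j, blockOnes k n x ℓ = k) ↔ FullBelow k j x := by
  constructor
  · intro hfull i hi
    have hℓ : i.1 / k < j := Nat.div_lt_of_lt_mul (by rw [Nat.mul_comm]; exact hi)
    have h2 := hfull _ hℓ
    rw [blockOnes_eq_k_iff _ _ hk (blk_bound hd (by omega))] at h2
    exact h2 i (pos_in_own_block hk i)
  · intro hfb ℓ hℓ
    rw [blockOnes_eq_k_iff _ _ hk (blk_bound hd (by omega))]
    intro i hi
    rw [mem_Blk] at hi
    apply hfb
    calc i.1 < ℓ * k + k := hi.2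
      _ = (ℓ + 1) * k := by ring
      _ ≤ j * k := Nat.mul_le_mul_right k (by omega)

lemma lead_ge_iff (hj : j ≤ n / k) (x : BitStr n) :
    j ≤ leadBlocks k n x ↔ ∀ ℓ < j, blockOnes k n x ℓ = k :=
  ⟨fun h ℓ hℓ => leadBlocks_spec x ℓ (lt_of_lt_of_le hℓ h),
   fun h => leadBlocks_ge x hj h⟩

/-! ### Product measures and pattern probabilities -/

lemma tsum_prod_bool (g : Fin n → Bool → ℝ≥0∞) :
    ∑' y : BitStr n, ∏ i, g i (y i) = ∏ i, (g i true + g i false) := by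
  classical
  rw [tsum_fintype, ← Fintype.prod_sum g]
  refine Finset.prod_congr rfl fun i _ => ?_
  rw [Fintype.sum_bool]

lemma tsum_prodw_pattern (v : Fin n → Bool → ℝ≥0∞)
    (hv : ∀ i, v i true + v i false = 1) (S : Finset (Fin n)) (g : Fin n → Bool) :
    ∑' y : BitStr n, (∏ i, v i (y i)) * (if ∀ i ∈ S, y i = g i then 1 else 0)
      = ∏ i ∈ S, v i (g i) := by
  classical
  have key : ∀ y : BitStr n, (if ∀ i ∈ S, y i = g i then (1:ℝ≥0∞) else 0)
      = ∏ i, (if i ∈ S then (if y i = g i then (1:ℝ≥0∞) else 0) else 1) := by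
    intro y
    rw [Finset.prod_ite_mem, Finset.univ_inter]
    simp only [Finset.prod_boole]
    congr 1
  calc ∑' y : BitStr n, (∏ i, v i (y i)) * (if ∀ i ∈ S, y i = g i then 1 else 0)
      = ∑' y : BitStr n, ∏ i,
          (v i (y i) * (if i ∈ S then (if y i = g i then (1:ℝ≥0∞) else 0) else 1)) := by
        refine tsum_congr fun y => ?_
        rw [key y, Finset.prod_mul_distrib]
    _ = ∏ i, (v i true * (if i ∈ S then (if true = g i then (1:ℝ≥0∞) else 0) else 1)
          + v i false * (if i ∈ S then (if false = g i then (1:ℝ≥0∞) else 0) else 1)) :=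
        tsum_prod_bool (fun i b =>
          v i b * (if i ∈ S then (if b = g i then (1:ℝ≥0∞) else 0) else 1))
    _ = ∏ i, (if i ∈ S then v i (g i) else 1) := by
        refine Finset.prod_congr rfl fun i _ => ?_
        by_cases hi : i ∈ S
        · simp only [hi, if_true]
          cases hg : g i <;> simp
        · simp only [hi, if_false, mul_one]
          exact hv i
    _ = ∏ i ∈ S, v i (g i) := by rw [Finset.prod_ite_mem, Finset.univ_inter]

/-- The per-bit mutation weight. -/
def w (n : ℕ) (a b : Bool) : ℝ≥0∞ := if b = a then 1 - (n : ℝ≥0∞)⁻¹ else (n : ℝ≥0∞)⁻¹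

lemma mut_apply (x y : BitStr n) : mutatePMF n x y = ∏ i, w n (x i) (y i) := by
  rw [mutatePMF, PMF.ofFintype_apply]
  rfl

lemma w_sum (hn : 0 < n) (a : Bool) : w n a true + w n a false = 1 := by
  have h1 : (1 : ℝ≥0∞) ≤ (n : ℝ≥0∞) := by exact_mod_cast hn
  have hinv : (n : ℝ≥0∞)⁻¹ ≤ 1 := ENNReal.inv_le_one.mpr h1
  cases a
  · simp only [w, if_neg (by simp : (true : Bool) ≠ false), if_pos rfl]
    exact add_tsub_cancel_of_le hinv
  · simp only [w, if_pos rfl, if_neg (by simp : (false : Bool) ≠ true)]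
    exact tsub_add_cancel_of_le hinv

lemma w_flip (hn : 0 < n) (a : Bool) : w n a (!a) = (n : ℝ≥0∞)⁻¹ := by
  cases a <;> simp [w]

lemma tsum_mut_pattern (hn : 0 < n) (x : BitStr n) (S : Finset (Fin n))
    (g : Fin n → Bool) :
    ∑' y : BitStr n, mutatePMF n x y * (if ∀ i ∈ S, y i = g i then 1 else 0)
      = ∏ i ∈ S, w n (x i) (g i) := by
  have := tsum_prodw_pattern (fun i b => w n (x i) b) (fun i => w_sum hn (x i)) S g
  rw [← this]
  exact tsum_congr fun y => by rw [mut_apply]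

lemma tsum_mut_flip (hn : 0 < n) (x : BitStr n) (S : Finset (Fin n)) :
    ∑' y : BitStr n, mutatePMF n x y * (if ∀ i ∈ S, y i = !(x i) then 1 else 0)
      = ((n : ℝ≥0∞)⁻¹) ^ S.card := by
  rw [tsum_mut_pattern hn x S (fun i => !(x i))]
  rw [Finset.prod_congr rfl fun i _ => w_flip hn (x i), Finset.prod_const]

lemma tsum_mut_one (x : BitStr n) :
    ∑' y : BitStr n, mutatePMF n x y = 1 := (mutatePMF n x).tsum_coe

/-! ### State machinery -/

abbrev StT (n : ℕ) := BitStr n × Bool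

/-- The deterministic part of one step: from state `s` and offspring `y`. -/
def nextSt (k n : ℕ) (s : StT n) (y : BitStr n) : StT n :=
  (if dlb k n s.1 ≤ dlb k n y then y else s.1, if y = allOnes n then true else s.2)

lemma darwinStep_eq (s : StT n) :
    darwinStep k n s = (mutatePMF n s.1).map (nextSt k n s) := rfl

lemma tsum_map_mul {α β : Type*} [DecidableEq β] (p : PMF α) (f : α → β) (F : β → ℝ≥0∞) :
    ∑' b, (p.map f) b * F b = ∑' a, p a * F (f a) := by
  calc ∑' b, (p.map f) b * F b
      = ∑' b, ∑' a, (if b = f a then p a else 0) * F b := by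
        refine tsum_congr fun b => ?_
        rw [PMF.map_apply, ENNReal.tsum_mul_right]
        congr 1
        exact tsum_congr fun a => by congr
    _ = ∑' a, ∑' b, (if b = f a then p a else 0) * F b := ENNReal.tsum_comm
    _ = ∑' a, p a * F (f a) := by
        refine tsum_congr fun a => ?_
        rw [tsum_eq_single (f a) ?_]
        · rw [if_pos rfl]
        · intro b hb
          rw [if_neg hb, zero_mul]

/-- Expectation of `F` under the distribution after `t` steps. -/
def EX (k n t : ℕ) (F : StT n → ℝ≥0∞) : ℝ≥0∞ := ∑' s, darwinDist k n t s * F s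

lemma EX_succ (t : ℕ) (F : StT n → ℝ≥0∞) :
    EX k n (t+1) F
      = EX k n t (fun s => ∑' y, mutatePMF n s.1 y * F (nextSt k n s y)) := by
  unfold EX
  rw [show darwinDist k n (t+1) = (darwinDist k n t).bind (darwinStep k n) from rfl]
  calc ∑' s₁, ((darwinDist k n t).bind (darwinStep k n)) s₁ * F s₁
      = ∑' s₁, ∑' s, darwinDist k n t s * darwinStep k n s s₁ * F s₁ := by
        refine tsum_congr fun s₁ => ?_
        rw [PMF.bind_apply, ENNReal.tsum_mul_right]
    _ = ∑' s, ∑' s₁, darwinDist k n t s * darwinStep k n s s₁ * F s₁ :=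
        ENNReal.tsum_comm
    _ = ∑' s, darwinDist k n t s * ∑' s₁, darwinStep k n s s₁ * F s₁ := by
        refine tsum_congr fun s => ?_
        rw [← ENNReal.tsum_mul_left]
        exact tsum_congr fun s₁ => (mul_assoc _ _ _)
    _ = _ := by
        refine tsum_congr fun s => ?_
        rw [darwinStep_eq, tsum_map_mul]

lemma EX_zero (F : StT n → ℝ≥0∞) :
    EX k n 0 F = ∑' x : BitStr n, (PMF.uniformOfFintype (BitStr n)) x
      * F (x, if x = allOnes n then true else false) := by
  unfold EX
  rw [show darwinDist k n 0 = (PMF.uniformOfFintype (BitStr n)).map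
    (fun x => (x, if x = allOnes n then true else false)) from rfl]
  exact tsum_map_mul _ _ _

lemma EX_mono {t : ℕ} {F G : StT n → ℝ≥0∞} (h : ∀ s, F s ≤ G s) :
    EX k n t F ≤ EX k n t G :=
  Summable.tsum_le_tsum (fun s => mul_le_mul_right (h s) _) ENNReal.summable ENNReal.summable

lemma EX_mono_ae {t : ℕ} {F G : StT n → ℝ≥0∞}
    (h : ∀ s, darwinDist k n t s ≠ 0 → F s ≤ G s) :
    EX k n t F ≤ EX k n t G := by
  refine Summable.tsum_le_tsum (fun s => ?_) ENNReal.summable ENNReal.summable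
  by_cases hs : darwinDist k n t s = 0
  · rw [hs, zero_mul, zero_mul]
  · exact mul_le_mul_right (h s hs) _

lemma EX_congr_ae {t : ℕ} {F G : StT n → ℝ≥0∞}
    (h : ∀ s, darwinDist k n t s ≠ 0 → F s = G s) :
    EX k n t F = EX k n t G :=
  le_antisymm (EX_mono_ae fun s hs => (h s hs).le)
    (EX_mono_ae fun s hs => (h s hs).ge)

lemma EX_add (t : ℕ) (F G : StT n → ℝ≥0∞) :
    EX k n t (fun s => F s + G s) = EX k n t F + EX k n t G := by
  unfold EX
  rw [← ENNReal.tsum_add]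
  exact tsum_congr fun s => mul_add _ _ _

lemma EX_const_mul (t : ℕ) (c : ℝ≥0∞) (F : StT n → ℝ≥0∞) :
    EX k n t (fun s => c * F s) = c * EX k n t F := by
  unfold EX
  rw [← ENNReal.tsum_mul_left]
  exact tsum_congr fun s => by ring

lemma EX_one (t : ℕ) : EX k n t (fun _ => 1) = 1 := by
  unfold EX
  simp only [mul_one]
  exact (darwinDist k n t).tsum_coe

lemma EX_le_one (t : ℕ) (F : StT n → ℝ≥0∞) (h : ∀ s, F s ≤ 1) :
    EX k n t F ≤ 1 := by
  rw [← EX_one (k := k) (n := n) t]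
  exact EX_mono h

lemma prOf_flagfalse (t : ℕ) :
    prOf (darwinDist k n t) {s | s.2 = false}
      = EX k n t (fun s => if s.2 = false then 1 else 0) := by
  unfold prOf EX
  refine tsum_congr fun s => ?_
  rw [Set.indicator_apply]
  simp only [Set.mem_setOf_eq]
  by_cases h : s.2 = false
  · rw [if_pos h, if_pos h, mul_one]
  · rw [if_neg h, if_neg h, mul_zero]

lemma darwinDist_zero_apply (x : BitStr n) (b : Bool) :
    darwinDist k n 0 (x, b)
      = if b = (if x = allOnes n then true else false)
        then ((Fintype.card (BitStr n) : ℝ≥0∞))⁻¹ else 0 := by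
  rw [show darwinDist k n 0 = (PMF.uniformOfFintype (BitStr n)).map
    (fun x => (x, if x = allOnes n then true else false)) from rfl]
  rw [PMF.map_apply]
  rw [tsum_eq_single x ?_]
  · by_cases hb : b = (if x = allOnes n then true else false)
    · rw [if_pos (by rw [hb]), if_pos hb, PMF.uniformOfFintype_apply]
    · rw [if_neg (by
        intro hcon
        exact hb (congrArg Prod.snd hcon)), if_neg hb]
  · intro a ha
    rw [if_neg]
    intro hcon
    exact ha (congrArg Prod.fst hcon).symm

lemma dlb_le_n (hk : 0 < k) (hd : k ∣ n) (x : BitStr n) : dlb k n x ≤ n := by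
  by_cases hx : x = allOnes n
  · rw [hx, dlb_allOnes]
  · exact le_of_lt (dlb_lt_n hk hd hx)

/-- Absorption: a state with flag `true` has parent `allOnes`. -/
lemma absorb (hk : 0 < k) (hd : k ∣ n) :
    ∀ t (x : BitStr n), darwinDist k n t (x, true) ≠ 0 → x = allOnes n := by
  intro t
  induction t with
  | zero =>
    intro x hx
    rw [darwinDist_zero_apply] at hx
    by_cases hall : x = allOnes n
    · exact hall
    · rw [if_neg (by simp [hall])] at hx
      exact absurd rfl hx
  | succ t ih =>
    intro x hx
    rw [show darwinDist k n (t+1) = (darwinDist k n t).bind (darwinStep k n) from rfl,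
      PMF.bind_apply] at hx
    have hex : ∃ s', (darwinDist k n t) s' * (darwinStep k n s') (x, true) ≠ 0 := by
      by_contra hall
      push_neg at hall
      exact hx (ENNReal.tsum_eq_zero.mpr hall)
    obtain ⟨s', hs'⟩ := hex
    have hmu : darwinDist k n t s' ≠ 0 := fun h => hs' (by rw [h, zero_mul])
    have hD : (darwinStep k n s') (x, true) ≠ 0 := fun h => hs' (by rw [h, mul_zero])
    rw [darwinStep_eq, PMF.map_apply] at hD
    have hex2 : ∃ y, (x, true) = nextSt k n s' y := by
      by_contra hall2
      push_neg at hall2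
      apply hD
      rw [ENNReal.tsum_eq_zero]
      intro y
      rw [if_neg (hall2 y)]
    obtain ⟨y, hne⟩ := hex2
    unfold nextSt at hne
    by_cases hyall : y = allOnes n
    · subst hyall
      have hacc : dlb k n s'.1 ≤ dlb k n (allOnes n) := by
        rw [dlb_allOnes]
        exact dlb_le_n hk hd s'.1
      rw [if_pos hacc] at hne
      have := congrArg Prod.fst hne
      simpa using this
    · have hflag : true = (if y = allOnes n then true else s'.2) := by
        have := congrArg Prod.snd hne
        simpa using this
      rw [if_neg hyall] at hflag
      have hs2 : s'.2 = true := hflag.symm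
      have hall1 : s'.1 = allOnes n := by
        apply ih s'.1
        have hseq : s' = (s'.1, true) := by
          rw [← hs2]
        rw [← hseq]
        exact hmu
      have hrej : ¬ dlb k n s'.1 ≤ dlb k n y := by
        rw [hall1, dlb_allOnes]
        intro hle
        exact hyall (allOnes_of_n_le_dlb hk hd hle)
      rw [if_neg hrej] at hne
      have hx1 : x = s'.1 := by
        have := congrArg Prod.fst hne
        simpa using this
      rw [hx1, hall1]

/-! ### Xor symmetry -/

def xorB (x v : BitStr n) : BitStr n := fun i => xor (x i) (v i)

lemma xorB_xorB (x v : BitStr n) : xorB (xorB x v) v = x := by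
  funext i
  simp [xorB, Bool.xor_assoc]

lemma xorB_cancel {x y v : BitStr n} : xorB x v = xorB y v ↔ x = y := by
  constructor
  · intro h
    rw [← xorB_xorB x v, h, xorB_xorB]
  · intro h; rw [h]

/-- `v` is supported inside block `j`. -/
def SuppBlk (k n j : ℕ) (v : BitStr n) : Prop :=
  ∀ i : Fin n, i ∉ Blk k n j → v i = false

lemma xorB_eq_outside {j : ℕ} {v : BitStr n} (hv : SuppBlk k n j v)
    (x : BitStr n) {i : Fin n} (hi : i ∉ Blk k n j) : xorB x v i = x i := by
  simp [xorB, hv i hi]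

lemma Blk_disjoint {ℓ j : ℕ} (hne : ℓ ≠ j) {i : Fin n} (hi : i ∈ Blk k n ℓ) :
    i ∉ Blk k n j := by
  intro hij
  rw [mem_Blk] at hi hij
  rcases Nat.lt_or_ge ℓ j with h | h
  · have h2 : (ℓ + 1) * k ≤ j * k := Nat.mul_le_mul_right k h
    rw [Nat.succ_mul] at h2
    omega
  · have h3 : j < ℓ := by omega
    have h2 : (j + 1) * k ≤ ℓ * k := Nat.mul_le_mul_right k h3
    rw [Nat.succ_mul] at h2
    omega

lemma blockOnes_xorB {j : ℕ} {v : BitStr n} (hv : SuppBlk k n j v)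
    (x : BitStr n) {ℓ : ℕ} (hne : ℓ ≠ j) :
    blockOnes k n (xorB x v) ℓ = blockOnes k n x ℓ := by
  rw [blockOnes_eq_card, blockOnes_eq_card]
  congr 1
  apply Finset.filter_congr
  intro i hi
  rw [xorB_eq_outside hv x (Blk_disjoint hne hi)]

lemma lead_xorB_lt {j : ℕ} {v : BitStr n} (hv : SuppBlk k n j v)
    (hj : j ≤ n / k) {x : BitStr n} (hx : leadBlocks k n x < j) :
    leadBlocks k n (xorB x v) = leadBlocks k n x := by
  apply leadBlocks_eq
  · exact leadBlocks_le x
  · intro ℓ hℓ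
    rw [blockOnes_xorB hv x (by omega)]
    exact leadBlocks_spec x ℓ hℓ
  · rw [blockOnes_xorB hv x (by omega)]
    exact leadBlocks_crit x (lt_of_lt_of_le hx hj)

lemma lead_xorB_ge {j : ℕ} {v : BitStr n} (hv : SuppBlk k n j v)
    {x : BitStr n} (hx : j ≤ leadBlocks k n x) :
    j ≤ leadBlocks k n (xorB x v) := by
  apply leadBlocks_ge _ (le_trans hx (leadBlocks_le x))
  intro ℓ hℓ
  rw [blockOnes_xorB hv x (by omega)]
  exact leadBlocks_spec x ℓ (lt_of_lt_of_le hℓ hx)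

lemma ne_allOnes_of_lead_lt (hk : 0 < k) (hd : k ∣ n) {j : ℕ} (hj : j ≤ n / k)
    {x : BitStr n} (hx : leadBlocks k n x < j) : x ≠ allOnes n := by
  intro h
  rw [h, leadBlocks_allOnes hk hd] at hx
  omega

lemma xorB_ne_allOnes (hk : 0 < k) (hd : k ∣ n) {j : ℕ} {v : BitStr n}
    (hv : SuppBlk k n j v) (hj : j ≤ n / k) {x : BitStr n}
    (hx : leadBlocks k n x < j) : xorB x v ≠ allOnes n := by
  apply ne_allOnes_of_lead_lt hk hd hj
  rw [lead_xorB_lt hv hj hx]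
  exact hx

lemma dlb_xorB (hk : 0 < k) (hd : k ∣ n) {j : ℕ} {v : BitStr n}
    (hv : SuppBlk k n j v) (hj : j ≤ n / k) {x : BitStr n}
    (hx : leadBlocks k n x < j) : dlb k n (xorB x v) = dlb k n x := by
  rw [dlb_ne (xorB_ne_allOnes hk hd hv hj hx),
    dlb_ne (ne_allOnes_of_lead_lt hk hd hj hx), lead_xorB_lt hv hj hx,
    blockOnes_xorB hv x (by omega)]

lemma mut_xorB (x y v : BitStr n) :
    mutatePMF n (xorB x v) (xorB y v) = mutatePMF n x y := by
  rw [mut_apply, mut_apply]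
  refine Finset.prod_congr rfl fun i _ => ?_
  cases hx : x i <;> cases hy : y i <;> cases hvv : v i <;> simp [w, xorB, hx, hy, hvv]

lemma dlb_ge_of_lead_ge (hk : 0 < k) (hd : k ∣ n) {j : ℕ} (hj : j ≤ n / k)
    {y : BitStr n} (hy : j ≤ leadBlocks k n y) : k * j ≤ dlb k n y := by
  by_cases hya : y = allOnes n
  · rw [hya, dlb_allOnes, ← n_eq hd]
    exact Nat.mul_le_mul_left k hj
  · exact le_trans (Nat.mul_le_mul_left k hy) (dlb_ge_k_mul hya)

lemma dlb_lt_of_lead_lt (hk : 0 < k) (hd : k ∣ n) {j : ℕ} (hj : j ≤ n / k)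
    {x : BitStr n} (hx : leadBlocks k n x < j) : dlb k n x < k * j := by
  have hxa := ne_allOnes_of_lead_lt hk hd hj hx
  calc dlb k n x < k * (leadBlocks k n x + 1) := dlb_lt_k_mul hk hxa
    _ ≤ k * j := Nat.mul_le_mul_left k (by omega)

lemma accept_of_lead_ge (hk : 0 < k) (hd : k ∣ n) {j : ℕ} (hj : j ≤ n / k)
    {x y : BitStr n} (hx : leadBlocks k n x < j) (hy : j ≤ leadBlocks k n y) :
    dlb k n x ≤ dlb k n y :=
  le_of_lt (lt_of_lt_of_le (dlb_lt_of_lead_lt hk hd hj hx)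
    (dlb_ge_of_lead_ge hk hd hj hy))

lemma lead_nextSt_ge (hk : 0 < k) (hd : k ∣ n) (s : StT n) (y : BitStr n) :
    leadBlocks k n s.1 ≤ leadBlocks k n (nextSt k n s y).1 := by
  unfold nextSt
  by_cases hacc : dlb k n s.1 ≤ dlb k n y
  · rw [if_pos hacc]
    exact accept_lead_mono hk hd hacc
  · rw [if_neg hacc]

lemma step_zero_of_lead (hk : 0 < k) (hd : k ∣ n) {s' s : StT n}
    (h : leadBlocks k n s.1 < leadBlocks k n s'.1) :
    (darwinStep k n s') s = 0 := by
  rw [darwinStep_eq, PMF.map_apply, ENNReal.tsum_eq_zero]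
  intro y
  rw [if_neg]
  intro hcon
  have h2 := lead_nextSt_ge hk hd s' y
  rw [← hcon] at h2
  omega

/-- The key pointwise equivariance of one transition. -/
lemma nextSt_xor_iff (hk : 0 < k) (hd : k ∣ n) {j : ℕ} (hj : j ≤ n / k)
    {v : BitStr n} (hv : SuppBlk k n j v) {s' s : StT n}
    (hL' : leadBlocks k n s'.1 < j) (hLs : leadBlocks k n s.1 < j)
    (y : BitStr n) :
    ((xorB s.1 v, s.2) = nextSt k n (xorB s'.1 v, s'.2) (xorB y v))
      ↔ (s = nextSt k n s' y) := by
  have hL'x : leadBlocks k n (xorB s'.1 v) = leadBlocks k n s'.1 :=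
    lead_xorB_lt hv hj hL'
  unfold nextSt
  by_cases hyL : j ≤ leadBlocks k n y
  · -- both accepted; both equalities are false
    have hacc1 : dlb k n s'.1 ≤ dlb k n y := accept_of_lead_ge hk hd hj hL' hyL
    have hacc2 : dlb k n (xorB s'.1 v) ≤ dlb k n (xorB y v) := by
      rw [dlb_xorB hk hd hv hj hL']
      exact accept_of_lead_ge hk hd hj hL' (lead_xorB_ge hv hyL)
    rw [if_pos hacc1, if_pos hacc2]
    constructor
    · intro hcon
      exfalso
      have h1 : xorB s.1 v = xorB y v := congrArg Prod.fst hcon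
      rw [xorB_cancel] at h1
      rw [h1] at hLs
      omega
    · intro hcon
      exfalso
      have h1 : s.1 = y := congrArg Prod.fst hcon
      rw [h1] at hLs
      omega
  · -- L y < j
    push_neg at hyL
    have hyx : dlb k n (xorB y v) = dlb k n y := dlb_xorB hk hd hv hj hyL
    have hsx : dlb k n (xorB s'.1 v) = dlb k n s'.1 := dlb_xorB hk hd hv hj hL'
    have hyall : y ≠ allOnes n := ne_allOnes_of_lead_lt hk hd hj hyL
    have hyall2 : xorB y v ≠ allOnes n := xorB_ne_allOnes hk hd hv hj hyL
    by_cases hacc : dlb k n s'.1 ≤ dlb k n y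
    · rw [if_pos hacc, if_pos (by rw [hyx, hsx]; exact hacc)]
      rw [if_neg hyall, if_neg hyall2]
      rw [Prod.ext_iff, Prod.ext_iff]
      simp only
      rw [xorB_cancel]
    · rw [if_neg hacc, if_neg (by rw [hyx, hsx]; exact hacc)]
      rw [if_neg hyall, if_neg hyall2]
      rw [Prod.ext_iff, Prod.ext_iff]
      simp only
      rw [xorB_cancel]

/-- State-space equivalence given by xoring with `v`. -/
def stEquiv (v : BitStr n) : StT n ≃ StT n where
  toFun s := (xorB s.1 v, s.2)
  invFun s := (xorB s.1 v, s.2)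
  left_inv s := by simp [xorB_xorB]
  right_inv s := by simp [xorB_xorB]

def xorEquiv (v : BitStr n) : BitStr n ≃ BitStr n where
  toFun x := xorB x v
  invFun x := xorB x v
  left_inv x := xorB_xorB x v
  right_inv x := xorB_xorB x v

/-- Invariance of the distribution of the EA under flipping bits of a block
beyond the critical block. -/
lemma dist_xor_inv (hk : 0 < k) (hd : k ∣ n) {j : ℕ} (hj : j ≤ n / k)
    {v : BitStr n} (hv : SuppBlk k n j v) :
    ∀ t (s : StT n), leadBlocks k n s.1 < j →
      darwinDist k n t (xorB s.1 v, s.2) = darwinDist k n t s := by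
  intro t
  induction t with
  | zero =>
    intro s hs
    obtain ⟨x, b⟩ := s
    simp only at hs
    rw [darwinDist_zero_apply, darwinDist_zero_apply]
    rw [if_neg (xorB_ne_allOnes hk hd hv hj hs),
      if_neg (ne_allOnes_of_lead_lt hk hd hj hs)]
  | succ t ih =>
    intro s hs
    rw [show darwinDist k n (t+1) = (darwinDist k n t).bind (darwinStep k n) from rfl,
      PMF.bind_apply, PMF.bind_apply]
    have hre := Equiv.tsum_eq (stEquiv v)
      (fun s' => darwinDist k n t s' * (darwinStep k n s') (xorB s.1 v, s.2))
    rw [← hre]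
    refine tsum_congr fun s' => ?_
    show darwinDist k n t (xorB s'.1 v, s'.2)
        * (darwinStep k n (xorB s'.1 v, s'.2)) (xorB s.1 v, s.2)
      = darwinDist k n t s' * (darwinStep k n s') s
    by_cases hL' : leadBlocks k n s'.1 < j
    · rw [ih s' hL']
      congr 1
      rw [darwinStep_eq, darwinStep_eq, PMF.map_apply, PMF.map_apply]
      rw [← Equiv.tsum_eq (xorEquiv v)]
      refine tsum_congr fun y => ?_
      simp only [xorEquiv, Equiv.coe_fn_mk]
      by_cases hcon : s = nextSt k n s' y
      · rw [if_pos hcon]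
        exact (if_pos ((nextSt_xor_iff hk hd hj hv hL' hs y).mpr hcon)).trans
          (mut_xorB s'.1 y v)
      · rw [if_neg hcon]
        exact if_neg (fun hc => hcon ((nextSt_xor_iff hk hd hj hv hL' hs y).mp hc))
    · push_neg at hL'
      have h1 : (darwinStep k n s') s = 0 :=
        step_zero_of_lead hk hd (by omega)
      have h2 : (darwinStep k n (xorB s'.1 v, s'.2)) (xorB s.1 v, s.2) = 0 := by
        apply step_zero_of_lead hk hd
        show leadBlocks k n (xorB s.1 v) < leadBlocks k n (xorB s'.1 v)
        rw [lead_xorB_lt hv hj hs]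
        have := lead_xorB_ge hv hL'
        omega
      rw [h1, h2, mul_zero, mul_zero]

/-! ### Scanning and trapping: transition lemmas -/

/-- Positions below block `j`. -/
def Low (k n j : ℕ) : Finset (Fin n) := Finset.univ.filter fun i => i.1 < j * k

lemma mem_Low {j : ℕ} {i : Fin n} : i ∈ Low k n j ↔ i.1 < j * k := by simp [Low]

lemma Low_Blk_disjoint {j : ℕ} : Disjoint (Low k n j) (Blk k n j) := by
  rw [Finset.disjoint_left]
  intro i hi hib
  rw [mem_Low] at hi
  rw [mem_Blk] at hib
  omega

/-- "Trapped at block `j`" state predicate. -/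
def TrapP (k n j : ℕ) (s : StT n) : Prop :=
  s.2 = false ∧ leadBlocks k n s.1 = j ∧ blockOnes k n s.1 j = 0

instance {j : ℕ} {s : StT n} : Decidable (TrapP k n j s) :=
  decidable_of_iff
    (s.2 = false ∧ leadBlocks k n s.1 = j ∧ blockOnes k n s.1 j = 0) Iff.rfl

lemma full_below_of_Low (hk : 0 < k) (hd : k ∣ n) {j : ℕ} (hj : j ≤ n / k)
    {y : BitStr n} (hFB : ∀ i ∈ Low k n j, y i = true) :
    ∀ ℓ < j, blockOnes k n y ℓ = k := by
  rw [fullBelow_iff hk hd hj y]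
  intro i hi
  exact hFB i (mem_Low.mpr hi)

lemma Low_of_full_below (hk : 0 < k) (hd : k ∣ n) {j : ℕ} (hj : j ≤ n / k)
    {y : BitStr n} (h : ∀ ℓ < j, blockOnes k n y ℓ = k) :
    ∀ i ∈ Low k n j, y i = true := by
  rw [fullBelow_iff hk hd hj y] at h
  intro i hi
  exact h i (mem_Low.mp hi)

lemma next_lead_ge_iff (hk : 0 < k) (hd : k ∣ n) {j : ℕ} (hj : j ≤ n / k)
    {s : StT n} (hs : leadBlocks k n s.1 < j) (y : BitStr n) :
    j ≤ leadBlocks k n (nextSt k n s y).1 ↔ ∀ i ∈ Low k n j, y i = true := by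
  constructor
  · intro h
    by_cases hacc : dlb k n s.1 ≤ dlb k n y
    · have h2 : j ≤ leadBlocks k n y := by
        have hsh : (nextSt k n s y).1 = y := by
          unfold nextSt
          simp only [if_pos hacc]
        rw [hsh] at h
        exact h
      exact Low_of_full_below hk hd hj ((lead_ge_iff hj y).mp h2)
    · have hsh : (nextSt k n s y).1 = s.1 := by
        unfold nextSt
        simp only [if_neg hacc]
      rw [hsh] at h
      omega
  · intro hFB
    have hyL : j ≤ leadBlocks k n y :=
      leadBlocks_ge y hj (full_below_of_Low hk hd hj hFB)
    have hacc := accept_of_lead_ge hk hd hj hs hyL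
    have hsh : (nextSt k n s y).1 = y := by
      unfold nextSt
      simp only [if_pos hacc]
    rw [hsh]
    exact hyL

lemma trap_arrival (hk2 : 2 ≤ k) (hd : k ∣ n) {j : ℕ} (hjlt : j < n / k)
    {s : StT n} (hs2 : s.2 = false) (hs : leadBlocks k n s.1 < j)
    {y : BitStr n} (hlow : ∀ i ∈ Low k n j, y i = true)
    (hblk : ∀ i ∈ Blk k n j, y i = false) :
    TrapP k n j (nextSt k n s y) := by
  have hk : 0 < k := by omega
  have hj : j ≤ n / k := le_of_lt hjlt
  have hB0 : blockOnes k n y j = 0 := (blockOnes_eq_zero_iff y j).mpr hblk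
  have hLy : leadBlocks k n y = j :=
    leadBlocks_eq y hj (full_below_of_Low hk hd hj hlow) (by omega)
  have hyall : y ≠ allOnes n := by
    intro hcon
    rw [hcon, leadBlocks_allOnes hk hd] at hLy
    omega
  have hacc := accept_of_lead_ge hk hd hj hs (le_of_eq hLy.symm)
  have hnext : nextSt k n s y = (y, s.2) := by
    unfold nextSt
    rw [if_pos hacc, if_neg hyall]
  rw [hnext, hs2]
  exact ⟨rfl, hLy, hB0⟩

lemma trap_stay (hk2 : 2 ≤ k) (hd : k ∣ n) {j : ℕ} (hjlt : j < n / k)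
    {s : StT n} (hT : TrapP k n j s) {y : BitStr n}
    (hex : ∃ i ∈ Blk k n j, y i = false) :
    TrapP k n j (nextSt k n s y) := by
  obtain ⟨hs2, hL, hB⟩ := hT
  have hk : 0 < k := by omega
  have hynot : blockOnes k n y j ≠ k := by
    intro hcon
    rw [blockOnes_eq_k_iff _ _ hk (blk_bound hd hjlt)] at hcon
    obtain ⟨i, hi, hif⟩ := hex
    rw [hcon i hi] at hif
    cases hif
  have hyall : y ≠ allOnes n := by
    intro hcon
    subst hcon
    apply hynot
    rw [blockOnes_eq_k_iff _ _ hk (blk_bound hd hjlt)]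
    intro i _
    rfl
  have hxall : s.1 ≠ allOnes n := by
    intro hcon
    rw [hcon, leadBlocks_allOnes hk hd] at hL
    omega
  by_cases hacc : dlb k n s.1 ≤ dlb k n y
  · have hLy : leadBlocks k n y = j := by
      have h1 : j ≤ leadBlocks k n y := hL ▸ accept_lead_mono hk hd hacc
      rcases Nat.eq_or_lt_of_le h1 with he | hlt
      · exact he.symm
      · exact absurd (leadBlocks_spec y j hlt) hynot
    have hBy : blockOnes k n y j = 0 := by
      have hacc2 := hacc
      rw [dlb_ne hxall, dlb_ne hyall, hL, hLy, hB] at hacc2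
      omega
    have hnext : nextSt k n s y = (y, s.2) := by
      unfold nextSt
      rw [if_pos hacc, if_neg hyall]
    rw [hnext, hs2]
    exact ⟨rfl, hLy, hBy⟩
  · have hnext : nextSt k n s y = (s.1, s.2) := by
      unfold nextSt
      rw [if_neg hacc, if_neg hyall]
    rw [hnext, hs2]
    exact ⟨rfl, hL, hB⟩

/-! ### Per-state expectation computations -/

/-- Probability that the offspring is all-ones below block `j`. -/
def FBp (k n j : ℕ) (x : BitStr n) : ℝ≥0∞ := ∏ i ∈ Low k n j, w n (x i) true

/-- Probability weight for block-`j` content pattern `u`. -/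
def BPat (k n j : ℕ) (x : BitStr n) (u : Fin n → Bool) : ℝ≥0∞ :=
  ∏ i ∈ Blk k n j, w n (x i) (u i)

lemma state_sum_lead_ge (hk : 0 < k) (hd : k ∣ n) (hn : 0 < n) {j : ℕ}
    (hj : j ≤ n / k) (s : StT n) (hsge : j ≤ leadBlocks k n s.1) :
    ∑' y, mutatePMF n s.1 y
      * (if j ≤ leadBlocks k n (nextSt k n s y).1 then 1 else 0) = 1 := by
  have : ∀ y, mutatePMF n s.1 y
      * (if j ≤ leadBlocks k n (nextSt k n s y).1 then 1 else 0)
      = mutatePMF n s.1 y := by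
    intro y
    rw [if_pos (le_trans hsge (lead_nextSt_ge hk hd s y)), mul_one]
  rw [tsum_congr this]
  exact tsum_mut_one s.1

lemma state_sum_lead_lt (hk : 0 < k) (hd : k ∣ n) (hn : 0 < n) {j : ℕ}
    (hj : j ≤ n / k) (s : StT n) (hs : leadBlocks k n s.1 < j) :
    ∑' y, mutatePMF n s.1 y
      * (if j ≤ leadBlocks k n (nextSt k n s y).1 then 1 else 0)
      = FBp k n j s.1 := by
  have hcong : ∀ y, mutatePMF n s.1 y
      * (if j ≤ leadBlocks k n (nextSt k n s y).1 then 1 else 0)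
      = mutatePMF n s.1 y
      * (if ∀ i ∈ Low k n j, y i = (fun _ => true) i then 1 else 0) := by
    intro y
    congr 1
    by_cases hB : ∀ i ∈ Low k n j, y i = true
    · rw [if_pos ((next_lead_ge_iff hk hd hj hs y).mpr hB), if_pos hB]
    · rw [if_neg (fun hc => hB ((next_lead_ge_iff hk hd hj hs y).mp hc)),
        if_neg hB]
  rw [tsum_congr hcong, tsum_mut_pattern hn s.1 (Low k n j) (fun _ => true)]
  rfl

lemma state_sum_trap_stay (hk2 : 2 ≤ k) (hd : k ∣ n) (hn : 0 < n) {j : ℕ}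
    (hjlt : j < n / k) (s : StT n) (hT : TrapP k n j s) :
    1 ≤ (∑' y, mutatePMF n s.1 y
        * (if TrapP k n j (nextSt k n s y) then 1 else 0))
      + ((n : ℝ≥0∞)⁻¹) ^ k := by
  classical
  have hk : 0 < k := by omega
  have hsplit : (1 : ℝ≥0∞)
      = (∑' y, mutatePMF n s.1 y
          * (if TrapP k n j (nextSt k n s y) then 1 else 0))
      + ∑' y, mutatePMF n s.1 y
          * (if ¬ TrapP k n j (nextSt k n s y) then 1 else 0) :=
    calc (1 : ℝ≥0∞) = ∑' y, mutatePMF n s.1 y := (tsum_mut_one s.1).symm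
      _ = ∑' y, (mutatePMF n s.1 y
            * (if TrapP k n j (nextSt k n s y) then 1 else 0)
          + mutatePMF n s.1 y
            * (if ¬ TrapP k n j (nextSt k n s y) then 1 else 0)) := by
          refine tsum_congr fun y => ?_
          by_cases hc : TrapP k n j (nextSt k n s y)
          · rw [if_pos hc, if_neg (not_not_intro hc), mul_one, mul_zero, add_zero]
          · rw [if_neg hc, if_pos hc, mul_zero, mul_one, zero_add]
      _ = _ := ENNReal.tsum_add
  refine hsplit.trans_le ?_
  apply add_le_add_right
  have hb : ∀ i ∈ Blk k n j, s.1 i = false :=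
    (blockOnes_eq_zero_iff s.1 j).mp hT.2.2
  calc ∑' y, mutatePMF n s.1 y
        * (if ¬ TrapP k n j (nextSt k n s y) then 1 else 0)
      ≤ ∑' y, mutatePMF n s.1 y
        * (if ∀ i ∈ Blk k n j, y i = (fun _ => true) i then 1 else 0) := by
        refine Summable.tsum_le_tsum (fun y => mul_le_mul_right ?_ _)
          ENNReal.summable ENNReal.summable
        by_cases hA : ∀ i ∈ Blk k n j, y i = true
        · have hle : (if ¬ TrapP k n j (nextSt k n s y) then (1:ℝ≥0∞) else 0)
              ≤ 1 := by split <;> simp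
          rw [if_pos hA]
          exact hle
        · rw [if_neg hA]
          have hex : ∃ i ∈ Blk k n j, y i = false := by
            push_neg at hA
            obtain ⟨i, hi, hne⟩ := hA
            exact ⟨i, hi, by revert hne; cases y i <;> simp⟩
          rw [if_neg (not_not_intro (trap_stay hk2 hd hjlt hT hex))]
    _ = ∏ i ∈ Blk k n j, w n (s.1 i) true :=
        tsum_mut_pattern hn s.1 (Blk k n j) (fun _ => true)
    _ = ((n : ℝ≥0∞)⁻¹) ^ k := by
        have hw : ∀ i ∈ Blk k n j, w n (s.1 i) true = (n : ℝ≥0∞)⁻¹ := by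
          intro i hi
          rw [hb i hi]
          simp [w]
        rw [Finset.prod_congr rfl hw, Finset.prod_const,
          card_Blk j hk (blk_bound hd hjlt)]

lemma state_sum_arrival (hk2 : 2 ≤ k) (hd : k ∣ n) (hn : 0 < n) {j : ℕ}
    (hjlt : j < n / k) (s : StT n) (hs2 : s.2 = false)
    (hs : leadBlocks k n s.1 < j) :
    FBp k n j s.1 * BPat k n j s.1 (fun _ => false)
      ≤ ∑' y, mutatePMF n s.1 y
        * (if TrapP k n j (nextSt k n s y) then 1 else 0) := by
  classical
  have hk : 0 < k := by omega
  set g : Fin n → Bool := fun i => if i.1 < j * k then true else false with hg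
  have hpat : FBp k n j s.1 * BPat k n j s.1 (fun _ => false)
      = ∑' y, mutatePMF n s.1 y
        * (if ∀ i ∈ Low k n j ∪ Blk k n j, y i = g i then 1 else 0) := by
    rw [tsum_mut_pattern hn s.1 (Low k n j ∪ Blk k n j) g,
      Finset.prod_union Low_Blk_disjoint]
    congr 1
    · refine Finset.prod_congr rfl fun i hi => ?_
      rw [mem_Low] at hi
      rw [hg]
      simp only [if_pos hi]
    · refine Finset.prod_congr rfl fun i hi => ?_
      rw [mem_Blk] at hi
      rw [hg]
      simp only [if_neg (by omega : ¬ i.1 < j * k)]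
  rw [hpat]
  refine Summable.tsum_le_tsum (fun y => mul_le_mul_right ?_ _)
    ENNReal.summable ENNReal.summable
  by_cases hA : ∀ i ∈ Low k n j ∪ Blk k n j, y i = g i
  · rw [if_pos hA]
    have hlow : ∀ i ∈ Low k n j, y i = true := by
      intro i hi
      have := hA i (Finset.mem_union_left _ hi)
      rw [mem_Low] at hi
      rw [this, hg]
      simp only [if_pos hi]
    have hblk : ∀ i ∈ Blk k n j, y i = false := by
      intro i hi
      have := hA i (Finset.mem_union_right _ hi)
      rw [mem_Blk] at hi
      rw [this, hg]
      simp only [if_neg (by omega : ¬ i.1 < j * k)]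
    rw [if_pos (trap_arrival hk2 hd hjlt hs2 hs hlow hblk)]
  · rw [if_neg hA]
    exact zero_le

/-! ### Tracked quantities and their evolution -/

def pT (k n j t : ℕ) : ℝ≥0∞ :=
  EX k n t (fun s => if TrapP k n j s then 1 else 0)

def HT (k n j t : ℕ) : ℝ≥0∞ :=
  EX k n t (fun s => if j ≤ leadBlocks k n s.1 then 1 else 0)

def scanNF (k n j t : ℕ) : ℝ≥0∞ :=
  EX k n t (fun s => if leadBlocks k n s.1 < j then FBp k n j s.1 else 0)

def scanPat (k n j t : ℕ) (u : Fin n → Bool) : ℝ≥0∞ :=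
  EX k n t (fun s => if s.2 = false ∧ leadBlocks k n s.1 < j
    then FBp k n j s.1 * BPat k n j s.1 u else 0)

def Pff (k n t : ℕ) : ℝ≥0∞ := EX k n t (fun s => if s.2 = false then 1 else 0)

lemma EX_congr {t : ℕ} {F G : StT n → ℝ≥0∞} (h : ∀ s, F s = G s) :
    EX k n t F = EX k n t G := tsum_congr fun s => by rw [h s]

lemma HT_step (hk : 0 < k) (hd : k ∣ n) (hn : 0 < n) {j : ℕ} (hj : j ≤ n / k)
    (t : ℕ) : HT k n j (t+1) = HT k n j t + scanNF k n j t := by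
  rw [HT, EX_succ, HT, scanNF, ← EX_add]
  refine EX_congr fun s => ?_
  by_cases hsge : j ≤ leadBlocks k n s.1
  · rw [state_sum_lead_ge hk hd hn hj s hsge, if_pos hsge,
      if_neg (by omega), add_zero]
  · rw [state_sum_lead_lt hk hd hn hj s (by omega), if_neg hsge,
      if_pos (by omega), zero_add]

lemma pT_step (hk2 : 2 ≤ k) (hd : k ∣ n) (hn : 0 < n) {j : ℕ}
    (hjlt : j < n / k) (t : ℕ) :
    pT k n j t + scanPat k n j t (fun _ => false)
      ≤ pT k n j (t+1) + ((n : ℝ≥0∞)⁻¹) ^ k * pT k n j t := by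
  have h1 : pT k n j (t+1) = EX k n t (fun s => ∑' y, mutatePMF n s.1 y
      * (if TrapP k n j (nextSt k n s y) then 1 else 0)) := by
    rw [pT, EX_succ]
  rw [h1, pT, scanPat, ← EX_add, ← EX_const_mul, ← EX_add]
  refine EX_mono fun s => ?_
  by_cases hT : TrapP k n j s
  · have hnotscan : ¬ (s.2 = false ∧ leadBlocks k n s.1 < j) := by
      intro hc
      rw [hT.2.1] at hc
      omega
    rw [if_pos hT, if_neg hnotscan, add_zero, mul_one]
    exact state_sum_trap_stay hk2 hd hn hjlt s hT
  · by_cases hscan : s.2 = false ∧ leadBlocks k n s.1 < j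
    · rw [if_neg hT, if_pos hscan, zero_add, mul_zero, add_zero]
      exact state_sum_arrival hk2 hd hn hjlt s hscan.1 hscan.2
    · rw [if_neg hT, if_neg hscan, add_zero]
      exact zero_le

/-! ### Uniformity of the scanned block content -/

lemma w_xor (a b c : Bool) : w n (xor a c) b = w n a (xor b c) := by
  cases a <;> cases b <;> cases c <;> simp [w]

lemma FBp_xorB {j : ℕ} {v : BitStr n} (hsupp : SuppBlk k n j v) (x : BitStr n) :
    FBp k n j (xorB x v) = FBp k n j x := by
  refine Finset.prod_congr rfl fun i hi => ?_
  rw [xorB_eq_outside hsupp x (Finset.disjoint_left.mp Low_Blk_disjoint hi)]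

lemma BPat_xorB {j : ℕ} (x v u : Fin n → Bool) :
    BPat k n j (xorB x v) u = BPat k n j x (fun i => xor (u i) (v i)) := by
  refine Finset.prod_congr rfl fun i hi => ?_
  exact w_xor (x i) (u i) (v i)

lemma scanPat_congr (hk : 0 < k) (hd : k ∣ n) {j : ℕ} (hj : j ≤ n / k)
    (t : ℕ) (u u' : Fin n → Bool) :
    scanPat k n j t u = scanPat k n j t u' := by
  classical
  set v : BitStr n := fun i => if i ∈ Blk k n j then xor (u i) (u' i) else false
    with hv
  have hsupp : SuppBlk k n j v := by
    intro i hi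
    rw [hv]
    simp only [if_neg hi]
  rw [scanPat, scanPat, EX, EX, ← Equiv.tsum_eq (stEquiv v)]
  refine tsum_congr fun s => ?_
  have hshape : (stEquiv v) s = (xorB s.1 v, s.2) := rfl
  rw [hshape]
  by_cases hc : s.2 = false ∧ leadBlocks k n s.1 < j
  · have hL := hc.2
    rw [dist_xor_inv hk hd hj hsupp t s hL]
    congr 1
    have hcx : ((xorB s.1 v, s.2).2 = false
        ∧ leadBlocks k n (xorB s.1 v, s.2).1 < j) := by
      refine ⟨hc.1, ?_⟩
      show leadBlocks k n (xorB s.1 v) < j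
      rw [lead_xorB_lt hsupp hj hL]
      exact hL
    rw [if_pos hcx, if_pos hc]
    show FBp k n j (xorB s.1 v) * BPat k n j (xorB s.1 v) u
      = FBp k n j s.1 * BPat k n j s.1 u'
    rw [FBp_xorB hsupp, BPat_xorB]
    congr 1
    refine Finset.prod_congr rfl fun i hi => ?_
    have hvi : v i = xor (u i) (u' i) := by simp only [hv, if_pos hi]
    show w n (s.1 i) (xor (u i) (v i)) = w n (s.1 i) (u' i)
    rw [hvi]
    cases hu : u i <;> cases hu' : u' i <;> simp
  · have hcx : ¬ ((xorB s.1 v, s.2).2 = false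
        ∧ leadBlocks k n (xorB s.1 v, s.2).1 < j) := by
      intro hc2
      apply hc
      refine ⟨hc2.1, ?_⟩
      by_contra hge
      have := lead_xorB_ge hsupp (by omega : j ≤ leadBlocks k n s.1)
      have h3 := hc2.2
      simp only at h3
      omega
    rw [if_neg hcx, if_neg hc, mul_zero, mul_zero]

/-! ### Scan decomposition -/

lemma EX_finset_sum {γ : Type*} (t : ℕ) (T : Finset γ) (g : γ → StT n → ℝ≥0∞) :
    EX k n t (fun s => ∑ a ∈ T, g a s) = ∑ a ∈ T, EX k n t (g a) := by
  unfold EX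
  rw [← Summable.tsum_finsetSum (fun i _ => ENNReal.summable)]
  exact tsum_congr fun s => Finset.mul_sum _ _ _

lemma scanNF_eq_scanF (hk : 0 < k) (hd : k ∣ n) {j : ℕ} (hj : j ≤ n / k)
    (t : ℕ) : scanNF k n j t
      = EX k n t (fun s => if s.2 = false ∧ leadBlocks k n s.1 < j
          then FBp k n j s.1 else 0) := by
  apply EX_congr_ae
  intro s hs
  by_cases h2 : s.2 = false
  · by_cases hL : leadBlocks k n s.1 < j
    · rw [if_pos hL, if_pos ⟨h2, hL⟩]
    · rw [if_neg hL, if_neg (fun hc => hL hc.2)]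
  · have hb : s.2 = true := by revert h2; cases s.2 <;> simp
    have hall : s.1 = allOnes n := by
      apply absorb hk hd t s.1
      have : (s.1, true) = s := by rw [← hb]
      rw [this]
      exact hs
    have hL : ¬ leadBlocks k n s.1 < j := by
      rw [hall, leadBlocks_allOnes hk hd]
      omega
    rw [if_neg hL, if_neg (fun hc => hL hc.2)]

lemma scanNF_eq (hk : 0 < k) (hd : k ∣ n) (hn : 0 < n) {j : ℕ}
    (hj : j ≤ n / k) (hjlt : j < n / k) (t : ℕ) :
    scanNF k n j t = 2 ^ k * scanPat k n j t (fun _ => false) := by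
  rw [scanNF_eq_scanF hk hd hj t]
  have hpoint : ∀ s : StT n,
      (if s.2 = false ∧ leadBlocks k n s.1 < j then FBp k n j s.1 else 0)
      = ∑ A ∈ (Blk k n j).powerset,
          (if s.2 = false ∧ leadBlocks k n s.1 < j
            then FBp k n j s.1 * BPat k n j s.1 (fun i => if i ∈ A then true else false)
            else 0) := by
    intro s
    by_cases hc : s.2 = false ∧ leadBlocks k n s.1 < j
    · simp only [if_pos hc]
      rw [← Finset.mul_sum]
      have hexp : ∀ A ∈ (Blk k n j).powerset,
          BPat k n j s.1 (fun i => if i ∈ A then true else false)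
          = (∏ i ∈ A, w n (s.1 i) true) * ∏ i ∈ Blk k n j \ A, w n (s.1 i) false := by
        intro A hA
        rw [Finset.mem_powerset] at hA
        have hun : A ∪ Blk k n j \ A = Blk k n j := Finset.union_sdiff_of_subset hA
        conv_lhs => rw [BPat, ← hun, Finset.prod_union Finset.disjoint_sdiff]
        congr 1
        · exact Finset.prod_congr rfl fun i hi => by rw [if_pos hi]
        · refine Finset.prod_congr rfl fun i hi => ?_
          rw [Finset.mem_sdiff] at hi
          rw [if_neg hi.2]
      have hsum : ∑ A ∈ (Blk k n j).powerset,
          BPat k n j s.1 (fun i => if i ∈ A then true else false) = 1 := by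
        rw [Finset.sum_congr rfl hexp, ← Finset.prod_add]
        exact Finset.prod_eq_one fun i _ => w_sum hn (s.1 i)
      rw [hsum, mul_one]
    · simp only [if_neg hc]
      rw [Finset.sum_congr rfl (fun A _ => rfl), Finset.sum_const_zero]
  rw [EX_congr hpoint, EX_finset_sum]
  have hcongr : ∀ A ∈ (Blk k n j).powerset,
      EX k n t (fun s => if s.2 = false ∧ leadBlocks k n s.1 < j
        then FBp k n j s.1 * BPat k n j s.1 (fun i => if i ∈ A then true else false)
        else 0)
      = scanPat k n j t (fun _ => false) := by
    intro A _
    exact scanPat_congr hk hd hj t _ _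
  rw [Finset.sum_congr rfl hcongr, Finset.sum_const, Finset.card_powerset,
    card_Blk j hk (blk_bound hd hjlt), nsmul_eq_mul]
  norm_cast

/-! ### Initial distribution bounds -/

lemma tsum_unif_pattern (S : Finset (Fin n)) (g : Fin n → Bool) :
    ∑' x : BitStr n, (PMF.uniformOfFintype (BitStr n)) x
      * (if ∀ i ∈ S, x i = g i then 1 else 0)
      = ((2:ℝ≥0∞)⁻¹) ^ S.card := by
  have hcard : (Fintype.card (BitStr n) : ℝ≥0∞) = 2 ^ n := by
    rw [show Fintype.card (BitStr n) = 2 ^ n by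
      rw [Fintype.card_fun, Fintype.card_bool, Fintype.card_fin]]
    push_cast
    ring
  have huni : ∀ x : BitStr n, (PMF.uniformOfFintype (BitStr n)) x
      = ∏ _i : Fin n, (2:ℝ≥0∞)⁻¹ := by
    intro x
    rw [PMF.uniformOfFintype_apply, Finset.prod_const, Finset.card_univ,
      Fintype.card_fin, hcard, ← ENNReal.inv_pow]
  rw [tsum_congr (fun x => by rw [huni x])]
  rw [tsum_prodw_pattern (fun _ _ => (2:ℝ≥0∞)⁻¹)
    (fun i => ENNReal.inv_two_add_inv_two) S g]
  rw [Finset.prod_const]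

lemma HT_zero_le (hk : 0 < k) (hd : k ∣ n) {j : ℕ} (hj1 : 1 ≤ j)
    (hjle : j ≤ n / k) : HT k n j 0 ≤ ((2:ℝ≥0∞)⁻¹) ^ k := by
  rw [HT, EX_zero]
  have hblk : (0:ℕ) * k + k ≤ n := blk_bound hd (by omega : 0 < n / k)
  calc ∑' x : BitStr n, (PMF.uniformOfFintype (BitStr n)) x
        * (if j ≤ leadBlocks k n (x, if x = allOnes n then true else false).1
            then 1 else 0)
      ≤ ∑' x : BitStr n, (PMF.uniformOfFintype (BitStr n)) x
        * (if ∀ i ∈ Blk k n 0, x i = (fun _ => true) i then 1 else 0) := by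
        refine Summable.tsum_le_tsum (fun x => mul_le_mul_right ?_ _)
          ENNReal.summable ENNReal.summable
        by_cases hL : j ≤ leadBlocks k n (x, if x = allOnes n then true else false).1
        · have hfull : blockOnes k n x 0 = k :=
            leadBlocks_spec x 0 (by
              have : j ≤ leadBlocks k n x := hL
              omega)
          rw [blockOnes_eq_k_iff _ _ hk hblk] at hfull
          rw [if_pos hL, if_pos hfull]
        · rw [if_neg hL]
          exact zero_le
    _ = ((2:ℝ≥0∞)⁻¹) ^ k := by
        rw [tsum_unif_pattern (Blk k n 0) (fun _ => true),
          card_Blk 0 hk hblk]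

/-! ### Per-block lower bound -/

lemma arrK_partial (hk2 : 2 ≤ k) (hd : k ∣ n) (hn : 0 < n) {j : ℕ}
    (hjlt : j < n / k) (T : ℕ) :
    ∑ t ∈ Finset.range T, scanPat k n j t (fun _ => false)
      ≤ pT k n j T + ((n : ℝ≥0∞)⁻¹) ^ k * ∑ t ∈ Finset.range T, pT k n j t := by
  induction T with
  | zero => simp
  | succ T ih =>
    rw [Finset.sum_range_succ, Finset.sum_range_succ]
    calc (∑ t ∈ Finset.range T, scanPat k n j t (fun _ => false))
          + scanPat k n j T (fun _ => false)
        ≤ (pT k n j T + ((n : ℝ≥0∞)⁻¹) ^ k * ∑ t ∈ Finset.range T, pT k n j t)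
          + scanPat k n j T (fun _ => false) := add_le_add_left ih _
      _ = (pT k n j T + scanPat k n j T (fun _ => false))
          + ((n : ℝ≥0∞)⁻¹) ^ k * ∑ t ∈ Finset.range T, pT k n j t := by ring
      _ ≤ (pT k n j (T+1) + ((n : ℝ≥0∞)⁻¹) ^ k * pT k n j T)
          + ((n : ℝ≥0∞)⁻¹) ^ k * ∑ t ∈ Finset.range T, pT k n j t :=
          add_le_add_left (pT_step hk2 hd hn hjlt T) _
      _ = pT k n j (T+1) + ((n : ℝ≥0∞)⁻¹) ^ k
          * ((∑ t ∈ Finset.range T, pT k n j t) + pT k n j T) := by ring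

lemma pT_le_Pff {j : ℕ} (t : ℕ) : pT k n j t ≤ Pff k n t := by
  refine EX_mono fun s => ?_
  by_cases hT : TrapP k n j s
  · rw [if_pos hT, if_pos hT.1]
  · rw [if_neg hT]
    exact zero_le

lemma tsum_pT_ge (hk2 : 2 ≤ k) (hd : k ∣ n) (hn : 0 < n) {j : ℕ}
    (hj1 : 1 ≤ j) (hjlt : j < n / k)
    (hfin : (∑' t, Pff k n t) ≠ ⊤) :
    (2⁻¹ : ℝ≥0∞) * ((2:ℝ≥0∞) ^ k)⁻¹ * (n : ℝ≥0∞) ^ k ≤ ∑' t, pT k n j t := by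
  have hk : 0 < k := by omega
  have hj : j ≤ n / k := le_of_lt hjlt
  have h2k0 : ((2:ℝ≥0∞) ^ k) ≠ 0 := pow_ne_zero _ two_ne_zero
  have h2kt : ((2:ℝ≥0∞) ^ k) ≠ ⊤ := ENNReal.pow_ne_top ENNReal.ofNat_ne_top
  have hPff0 : Filter.Tendsto (Pff k n) Filter.atTop (nhds 0) :=
    ENNReal.tendsto_atTop_zero_of_tsum_ne_top hfin
  set ν : ℝ≥0∞ := ((n : ℝ≥0∞)⁻¹) ^ k with hν
  set P : ℝ≥0∞ := ∑' t, pT k n j t with hP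
  set Aq : ℝ≥0∞ := ∑' t, scanPat k n j t (fun _ => false) with hAq
  -- Step 1 : Aq ≤ ν * P
  have hA : Aq ≤ ν * P := by
    have hpart : ∀ T, ∑ t ∈ Finset.range T, scanPat k n j t (fun _ => false)
        ≤ Pff k n T + ν * P := by
      intro T
      refine le_trans (arrK_partial hk2 hd hn hjlt T) ?_
      exact add_le_add (pT_le_Pff T)
        (mul_le_mul_right (ENNReal.sum_le_tsum _) ν)
    have h1 : Filter.Tendsto (fun T => ∑ t ∈ Finset.range T,
        scanPat k n j t (fun _ => false)) Filter.atTop (nhds Aq) :=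
      ENNReal.tendsto_nat_tsum _
    have h2 : Filter.Tendsto (fun T => Pff k n T + ν * P) Filter.atTop
        (nhds (0 + ν * P)) := hPff0.add_const _
    have h3 := le_of_tendsto_of_tendsto h1 h2
      (Filter.Eventually.of_forall hpart)
    rwa [zero_add] at h3
  -- Step 2 : H identity
  have hHT : ∀ T, HT k n j T = HT k n j 0
      + ∑ t ∈ Finset.range T, scanNF k n j t := by
    intro T
    induction T with
    | zero => simp
    | succ T ih =>
      rw [Finset.sum_range_succ, HT_step hk hd hn hj T, ih]
      ring
  -- Step 3 : 1 ≤ HT T + Pff T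
  have hone : ∀ T, (1:ℝ≥0∞) ≤ HT k n j T + Pff k n T := by
    intro T
    have hmono : EX k n T (fun _ => (1:ℝ≥0∞)) ≤ EX k n T
        (fun s => (if j ≤ leadBlocks k n s.1 then 1 else 0)
          + (if s.2 = false then 1 else 0)) := by
      refine EX_mono_ae fun s hs => ?_
      by_cases h2 : s.2 = false
      · rw [if_pos h2]
        exact le_add_self
      · have hb : s.2 = true := by revert h2; cases s.2 <;> simp
        have hall : s.1 = allOnes n := by
          apply absorb hk hd T s.1
          have hseq : (s.1, true) = s := by rw [← hb]
          rw [hseq]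
          exact hs
        have hL : j ≤ leadBlocks k n s.1 := by
          rw [hall, leadBlocks_allOnes hk hd]
          omega
        rw [if_pos hL]
        exact le_add_right le_rfl
    rw [EX_one, EX_add] at hmono
    exact hmono
  -- Step 4 : 1 ≤ HT 0 + 2^k * Aq
  have h4 : (1:ℝ≥0∞) ≤ HT k n j 0 + 2 ^ k * Aq := by
    have hineq : ∀ T, (1:ℝ≥0∞) ≤ (HT k n j 0 + 2 ^ k * Aq) + Pff k n T := by
      intro T
      calc (1:ℝ≥0∞) ≤ HT k n j T + Pff k n T := hone T
        _ = HT k n j 0 + (∑ t ∈ Finset.range T, scanNF k n j t) + Pff k n T := by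
            rw [hHT T]
        _ ≤ (HT k n j 0 + 2 ^ k * Aq) + Pff k n T := by
            refine add_le_add_left (add_le_add_right ?_ _) _
            have hse : ∀ t ∈ Finset.range T, scanNF k n j t
                = 2 ^ k * scanPat k n j t (fun _ => false) :=
              fun t _ => scanNF_eq hk hd hn hj hjlt t
            rw [Finset.sum_congr rfl hse, ← Finset.mul_sum]
            exact mul_le_mul_right (ENNReal.sum_le_tsum _) _
    have h2' : Filter.Tendsto (fun T => (HT k n j 0 + 2 ^ k * Aq) + Pff k n T)
        Filter.atTop (nhds ((HT k n j 0 + 2 ^ k * Aq) + 0)) :=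
      (tendsto_const_nhds).add hPff0
    have h3 := le_of_tendsto_of_tendsto tendsto_const_nhds h2'
      (Filter.Eventually.of_forall hineq)
    rwa [add_zero] at h3
  -- Step 5 : 2⁻¹ ≤ 2^k * Aq
  have h5 : (2⁻¹ : ℝ≥0∞) ≤ 2 ^ k * Aq := by
    have hhalf : HT k n j 0 ≤ 2⁻¹ := by
      refine le_trans (HT_zero_le hk hd hj1 hj) ?_
      calc ((2:ℝ≥0∞)⁻¹) ^ k ≤ (2⁻¹ : ℝ≥0∞) ^ 1 :=
        pow_le_pow_of_le_one (zero_le) (ENNReal.inv_le_one.mpr one_le_two) hk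
      _ = 2⁻¹ := pow_one _
    have h6 : (1:ℝ≥0∞) ≤ 2⁻¹ + 2 ^ k * Aq :=
      le_trans h4 (add_le_add_left hhalf _)
    have h7 : (1:ℝ≥0∞) - 2⁻¹ ≤ 2 ^ k * Aq := tsub_le_iff_left.mpr h6
    rwa [ENNReal.one_sub_inv_two] at h7
  -- Step 6 : conclude
  have hAq2 : 2⁻¹ * ((2:ℝ≥0∞) ^ k)⁻¹ ≤ Aq := by
    have := mul_le_mul_right h5 ((2:ℝ≥0∞) ^ k)⁻¹
    rwa [← mul_assoc, ENNReal.inv_mul_cancel h2k0 h2kt, one_mul,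
      mul_comm] at this
  have hn0 : ((n:ℝ≥0∞)) ≠ 0 := by
    simp only [ne_eq, Nat.cast_eq_zero]
    omega
  have hmulν : (n : ℝ≥0∞) ^ k * ν = 1 := by
    rw [hν, ← mul_pow, ENNReal.mul_inv_cancel hn0 (ENNReal.natCast_ne_top n),
      one_pow]
  calc 2⁻¹ * ((2:ℝ≥0∞) ^ k)⁻¹ * (n : ℝ≥0∞) ^ k
      ≤ Aq * (n : ℝ≥0∞) ^ k := mul_le_mul_left hAq2 _
    _ ≤ ν * P * (n : ℝ≥0∞) ^ k := mul_le_mul_left hA _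
    _ = ((n : ℝ≥0∞) ^ k * ν) * P := by ring
    _ = P := by rw [hmulν, one_mul]

/-! ### Main lower bound -/

lemma darwinERT_eq_tsum_Pff : darwinERT k n = ∑' t, Pff k n t :=
  tsum_congr fun t => prOf_flagfalse t

lemma main_bound (hk2 : 2 ≤ k) (hn : 0 < n) (hd : k ∣ n) (hN : 2 * k ≤ n) :
    ((4 * k * 2 ^ k : ℕ) : ℝ≥0∞)⁻¹ * (n : ℝ≥0∞) ^ (k + 1) ≤ darwinERT k n := by
  by_cases hfin : darwinERT k n = ⊤
  · rw [hfin]; exact le_top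
  have hk : 0 < k := by omega
  have hert : darwinERT k n = ∑' t, Pff k n t := darwinERT_eq_tsum_Pff
  set m := n / k with hm
  have hmk : k * m = n := n_eq hd
  have hm2 : 2 ≤ m := by
    by_contra h
    push_neg at h
    have h1 : k * m ≤ k * 1 := Nat.mul_le_mul_left k (by omega)
    rw [Nat.mul_one, hmk] at h1
    omega
  have hdisj : ∀ t, ∑ j ∈ Finset.Icc 1 (m-1), pT k n j t ≤ Pff k n t := by
    intro t
    have heq : ∑ j ∈ Finset.Icc 1 (m-1), pT k n j t
        = EX k n t (fun s => ∑ j ∈ Finset.Icc 1 (m-1),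
            (if TrapP k n j s then 1 else 0)) := (EX_finset_sum t _ _).symm
    rw [heq, Pff]
    refine EX_mono fun s => ?_
    by_cases hff : s.2 = false
    · rw [if_pos hff]
      calc ∑ j ∈ Finset.Icc 1 (m-1), (if TrapP k n j s then (1:ℝ≥0∞) else 0)
          ≤ ∑ j ∈ Finset.Icc 1 (m-1),
              (if j = leadBlocks k n s.1 then (1:ℝ≥0∞) else 0) := by
            refine Finset.sum_le_sum fun j _ => ?_
            by_cases hT : TrapP k n j s
            · rw [if_pos hT, if_pos hT.2.1.symm]
            · rw [if_neg hT]
              exact zero_le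
        _ = (if leadBlocks k n s.1 ∈ Finset.Icc 1 (m-1) then (1:ℝ≥0∞) else 0) :=
            Finset.sum_ite_eq' _ _ _
        _ ≤ 1 := by split <;> simp
    · rw [if_neg hff,
        Finset.sum_congr rfl (fun j _ => if_neg (fun hT => hff hT.1)),
        Finset.sum_const_zero]
  have hjb : ∀ j ∈ Finset.Icc 1 (m-1),
      (2⁻¹ : ℝ≥0∞) * ((2:ℝ≥0∞) ^ k)⁻¹ * (n:ℝ≥0∞) ^ k ≤ ∑' t, pT k n j t := by
    intro j hj
    rw [Finset.mem_Icc] at hj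
    exact tsum_pT_ge hk2 hd hn hj.1 (by omega) (by rw [← hert]; exact hfin)
  have hERT : ∑ j ∈ Finset.Icc 1 (m-1), ∑' t, pT k n j t ≤ darwinERT k n := by
    rw [hert]
    calc ∑ j ∈ Finset.Icc 1 (m-1), ∑' t, pT k n j t
        = ∑' t, ∑ j ∈ Finset.Icc 1 (m-1), pT k n j t :=
          (Summable.tsum_finsetSum (fun j _ => ENNReal.summable)).symm
      _ ≤ ∑' t, Pff k n t :=
          Summable.tsum_le_tsum hdisj ENNReal.summable ENNReal.summable
  have hcard : (Finset.Icc 1 (m-1)).card = m - 1 := by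
    rw [Nat.card_Icc]
    omega
  have hlb : ((m - 1 : ℕ) : ℝ≥0∞)
      * ((2⁻¹ : ℝ≥0∞) * ((2:ℝ≥0∞) ^ k)⁻¹ * (n:ℝ≥0∞) ^ k) ≤ darwinERT k n := by
    refine le_trans ?_ hERT
    have hconst : ((m - 1 : ℕ) : ℝ≥0∞)
        * ((2⁻¹ : ℝ≥0∞) * ((2:ℝ≥0∞) ^ k)⁻¹ * (n:ℝ≥0∞) ^ k)
        = ∑ _j ∈ Finset.Icc 1 (m-1),
            ((2⁻¹ : ℝ≥0∞) * ((2:ℝ≥0∞) ^ k)⁻¹ * (n:ℝ≥0∞) ^ k) := by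
      rw [Finset.sum_const, hcard, nsmul_eq_mul]
    rw [hconst]
    exact Finset.sum_le_sum hjb
  refine le_trans ?_ hlb
  -- numeric part
  have hA0 : ((4 * k * 2 ^ k : ℕ) : ℝ≥0∞) ≠ 0 := by
    simp only [ne_eq, Nat.cast_eq_zero]
    positivity
  have hAt : ((4 * k * 2 ^ k : ℕ) : ℝ≥0∞) ≠ ⊤ := ENNReal.natCast_ne_top _
  have h2k0 : ((2:ℝ≥0∞) ^ k) ≠ 0 := pow_ne_zero _ two_ne_zero
  have h2kt : ((2:ℝ≥0∞) ^ k) ≠ ⊤ := ENNReal.pow_ne_top ENNReal.ofNat_ne_top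
  have hmain : (n : ℝ≥0∞) ^ (k+1) ≤ ((4 * k * 2 ^ k : ℕ) : ℝ≥0∞)
      * (((m - 1 : ℕ) : ℝ≥0∞)
        * ((2⁻¹ : ℝ≥0∞) * ((2:ℝ≥0∞) ^ k)⁻¹ * (n:ℝ≥0∞) ^ k)) := by
    have hcast : ((4 * k * 2 ^ k : ℕ) : ℝ≥0∞)
        = 4 * (k : ℝ≥0∞) * (2:ℝ≥0∞) ^ k := by
      push_cast
      ring
    have c4 : (4:ℝ≥0∞) * 2⁻¹ = 2 := by
      rw [show (4:ℝ≥0∞) = 2 * 2 by norm_num, mul_assoc,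
        ENNReal.mul_inv_cancel two_ne_zero ENNReal.ofNat_ne_top, mul_one]
    have c2k : (2:ℝ≥0∞) ^ k * ((2:ℝ≥0∞) ^ k)⁻¹ = 1 :=
      ENNReal.mul_inv_cancel h2k0 h2kt
    have hrhs : ((4 * k * 2 ^ k : ℕ) : ℝ≥0∞)
        * (((m - 1 : ℕ) : ℝ≥0∞)
          * ((2⁻¹ : ℝ≥0∞) * ((2:ℝ≥0∞) ^ k)⁻¹ * (n:ℝ≥0∞) ^ k))
        = (((m-1:ℕ) : ℝ≥0∞) * (2 * (k : ℝ≥0∞))) * (n:ℝ≥0∞) ^ k := by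
      rw [hcast]
      calc 4 * (k : ℝ≥0∞) * (2:ℝ≥0∞) ^ k
            * (((m - 1 : ℕ) : ℝ≥0∞)
              * ((2⁻¹ : ℝ≥0∞) * ((2:ℝ≥0∞) ^ k)⁻¹ * (n:ℝ≥0∞) ^ k))
          = (((m-1:ℕ) : ℝ≥0∞) * ((4 * 2⁻¹) * (k : ℝ≥0∞)
              * ((2:ℝ≥0∞) ^ k * ((2:ℝ≥0∞) ^ k)⁻¹))) * (n:ℝ≥0∞) ^ k := by
            ring
        _ = _ := by rw [c4, c2k, mul_one]
    rw [hrhs]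
    have hnat : n ≤ (m - 1) * (2 * k) := by
      have h1 : m ≤ 2 * (m - 1) := by omega
      have h2 : k * m ≤ k * (2 * (m-1)) := Nat.mul_le_mul_left k h1
      rw [hmk] at h2
      calc n ≤ k * (2 * (m-1)) := h2
        _ = (m - 1) * (2 * k) := by ring
    have hcastn : ((n:ℕ) : ℝ≥0∞) ≤ ((m-1:ℕ) : ℝ≥0∞) * (2 * (k:ℝ≥0∞)) := by
      calc ((n:ℕ) : ℝ≥0∞) ≤ (((m - 1) * (2 * k) : ℕ) : ℝ≥0∞) :=
        Nat.cast_le.mpr hnat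
        _ = ((m-1:ℕ) : ℝ≥0∞) * (2 * (k:ℝ≥0∞)) := by push_cast; ring
    calc (n : ℝ≥0∞) ^ (k+1) = (n : ℝ≥0∞) * (n : ℝ≥0∞) ^ k := by
          rw [pow_succ]
          ring
      _ ≤ (((m-1:ℕ) : ℝ≥0∞) * (2 * (k:ℝ≥0∞))) * (n:ℝ≥0∞) ^ k :=
          mul_le_mul_left hcastn _
  have := mul_le_mul_right hmain ((4 * k * 2 ^ k : ℕ) : ℝ≥0∞)⁻¹
  rwa [← mul_assoc, ENNReal.inv_mul_cancel hA0 hAt, one_mul] at this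

end DLBaux

/-- For every constant integer `k ≥ 2` there is a constant `c > 0` such that for
all sufficiently large positive integer multiples `n` of `k`, the expected runtime
of the Darwinian (1+1) EA on `DLB_k` over `{0,1}^n` is at least `c · n^(k+1)`. -/
theorem darwin_ert_lower (k : ℕ) (hk : 2 ≤ k) :
    ∃ c : ℝ, 0 < c ∧ ∃ N : ℕ, ∀ n : ℕ, N ≤ n → 0 < n → k ∣ n →
      ENNReal.ofReal c * (n : ℝ≥0∞) ^ (k + 1) ≤ darwinERT k n := by
  refine ⟨((4 * k * 2 ^ k : ℕ) : ℝ)⁻¹, by positivity, 2 * k, ?_⟩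
  intro n hN hn hd
  have hofr : ENNReal.ofReal ((4 * k * 2 ^ k : ℕ) : ℝ)⁻¹
      = ((4 * k * 2 ^ k : ℕ) : ℝ≥0∞)⁻¹ := by
    rw [ENNReal.ofReal_inv_of_pos (by positivity), ENNReal.ofReal_natCast]
  rw [hofr]
  exact DLBaux.main_bound hk hn hd hN

end
end
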